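/- arXiv:2002.12850 — 9 statements merged into one kernel-verified Lean document; each statement's English description precedes it below -/
import Mathlib

section
/- Let A be a nonsingular real n×n matrix, b ∈ ℝⁿ and x⁽⁰⁾ ∈ ℝⁿ with r⁽⁰⁾ = b − Ax⁽⁰⁾ ≠ 0. Then the GMRES method converges in exactly ν(A, r⁽⁰⁾) steps, where ν(A, r⁽⁰⁾) is the grade of r⁽⁰⁾ with respect to A: the GMRES iterate x⁽ᵏ⁾ satisfies Ax⁽ᵏ⁾ = b if and only if k ≥ ν(A, r⁽⁰⁾). -/
open Matrix

/-- The Euclidean (ℓ²) norm of a vector of `ℝⁿ`. -/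
noncomputable def l2norm {n : ℕ} (v : Fin n → ℝ) : ℝ := Real.sqrt (∑ i, v i ^ 2)

/-- The order-`j` Krylov subspace `𝒦ⱼ(A, v) = span{v, Av, …, A^{j−1}v}`. -/
def krylov {n : ℕ} (A : Matrix (Fin n) (Fin n) ℝ) (v : Fin n → ℝ) (j : ℕ) :
    Submodule ℝ (Fin n → ℝ) :=
  Submodule.span ℝ {w | ∃ i < j, w = (A ^ i) *ᵥ v}

/-- The grade `ν(A, v)` of `v` with respect to `A`: the smallest degree of a nonzero
polynomial `P` with `P(A)v = 0`. -/
noncomputable def krylovGrade {n : ℕ} (A : Matrix (Fin n) (Fin n) ℝ) (v : Fin n → ℝ) : ℕ :=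
  sInf {ℓ : ℕ | ∃ P : Polynomial ℝ, P ≠ 0 ∧ P.natDegree = ℓ ∧ (Polynomial.aeval A P) *ᵥ v = 0}

/-- `x` is a run of the GMRES method for the system `Ax = b`: for each `k ≥ 1`, the iterate
`x k` minimizes the Euclidean norm of the residual `b − Ay` over the affine space
`x 0 + 𝒦ₖ(A, b − A x 0)`. -/
def IsGMRES {n : ℕ} (A : Matrix (Fin n) (Fin n) ℝ) (b : Fin n → ℝ)
    (x : ℕ → (Fin n → ℝ)) : Prop :=
  ∀ k, 1 ≤ k →
    (∃ z ∈ krylov A (b - A *ᵥ x 0) k, x k = x 0 + z) ∧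
    ∀ y : Fin n → ℝ, (∃ z ∈ krylov A (b - A *ᵥ x 0) k, y = x 0 + z) →
      l2norm (b - A *ᵥ x k) ≤ l2norm (b - A *ᵥ y)

open Polynomial

lemma l2norm_nonneg' {n : ℕ} (v : Fin n → ℝ) : 0 ≤ l2norm v := Real.sqrt_nonneg _

lemma l2norm_eq_zero' {n : ℕ} {v : Fin n → ℝ} (h : l2norm v = 0) : v = 0 := by
  have h1 : ∑ i, v i ^ 2 ≤ 0 := Real.sqrt_eq_zero'.mp h
  have h2 : ∑ i, v i ^ 2 = 0 :=
    le_antisymm h1 (Finset.sum_nonneg fun i _ => sq_nonneg _)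
  funext i
  have := (Finset.sum_eq_zero_iff_of_nonneg (fun i _ => sq_nonneg (v i))).mp h2 i
    (Finset.mem_univ i)
  exact pow_eq_zero_iff (by norm_num) |>.mp this

lemma sum_mulVec' {n : ℕ} {ι : Type*} [DecidableEq ι] (s : Finset ι) (f : ι → Matrix (Fin n) (Fin n) ℝ)
    (v : Fin n → ℝ) : (∑ i ∈ s, f i) *ᵥ v = ∑ i ∈ s, f i *ᵥ v := by
  induction s using Finset.induction with
  | empty => simp [Matrix.zero_mulVec]
  | insert _ _ h ih => rw [Finset.sum_insert h, Finset.sum_insert h, Matrix.add_mulVec, ih]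

lemma mem_krylov_of_poly {n : ℕ} (A : Matrix (Fin n) (Fin n) ℝ) (v : Fin n → ℝ) (k : ℕ)
    (Q : Polynomial ℝ) (hQ : ∀ i, k ≤ i → Q.coeff i = 0) :
    (Polynomial.aeval A Q) *ᵥ v ∈ krylov A v k := by
  have hQsum : Q = ∑ i ∈ Finset.range k, Polynomial.monomial i (Q.coeff i) := by
    ext j
    rw [Polynomial.finset_sum_coeff]
    by_cases hj : j < k
    · rw [Finset.sum_eq_single j]
      · simp
      · intro i _ hij; simp [Polynomial.coeff_monomial, hij]
      · intro h; exact absurd (Finset.mem_range.mpr hj) h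
    · rw [hQ j (le_of_not_gt hj), Finset.sum_eq_zero]
      intro i hi
      have : i ≠ j := by
        intro h; exact hj (h ▸ Finset.mem_range.mp hi)
      simp [Polynomial.coeff_monomial, this]
  rw [hQsum, map_sum]
  rw [sum_mulVec']
  apply Submodule.sum_mem
  intro i hi
  rw [Polynomial.aeval_monomial]
  have : ((algebraMap ℝ (Matrix (Fin n) (Fin n) ℝ)) (Q.coeff i) * A ^ i) *ᵥ v
      = (Q.coeff i) • ((A ^ i) *ᵥ v) := by
    rw [Algebra.algebraMap_eq_smul_one, smul_mul_assoc, one_mul, Matrix.smul_mulVec]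
  rw [this]
  exact Submodule.smul_mem _ _ (Submodule.subset_span ⟨i, Finset.mem_range.mp hi, rfl⟩)

lemma poly_of_mem_krylov {n : ℕ} (A : Matrix (Fin n) (Fin n) ℝ) (v : Fin n → ℝ) (k : ℕ)
    (z : Fin n → ℝ) (hz : z ∈ krylov A v k) :
    ∃ Q : Polynomial ℝ, (∀ i, k ≤ i → Q.coeff i = 0) ∧ z = (Polynomial.aeval A Q) *ᵥ v := by
  induction hz using Submodule.span_induction with
  | mem w hw =>
    obtain ⟨i, hi, rfl⟩ := hw
    refine ⟨X ^ i, fun j hj => ?_, by simp⟩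
    rw [Polynomial.coeff_X_pow, if_neg (by omega)]
  | zero => exact ⟨0, by simp, by simp⟩
  | add a b _ _ iha ihb =>
    obtain ⟨Qa, hQa, rfl⟩ := iha
    obtain ⟨Qb, hQb, rfl⟩ := ihb
    refine ⟨Qa + Qb, fun i hi => by simp [hQa i hi, hQb i hi], ?_⟩
    rw [map_add, Matrix.add_mulVec]
  | smul c a _ iha =>
    obtain ⟨Qa, hQa, rfl⟩ := iha
    refine ⟨c • Qa, fun i hi => by simp [hQa i hi], ?_⟩
    rw [_root_.map_smul, Matrix.smul_mulVec]

lemma krylov_mono {n : ℕ} (A : Matrix (Fin n) (Fin n) ℝ) (v : Fin n → ℝ) {j k : ℕ}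
    (h : j ≤ k) : krylov A v j ≤ krylov A v k :=
  Submodule.span_mono fun w ⟨i, hi, hw⟩ => ⟨i, lt_of_lt_of_le hi h, hw⟩

/-- For a nonsingular `A` and `r⁽⁰⁾ = b − Ax⁽⁰⁾ ≠ 0`, the GMRES method
converges in exactly `ν(A, r⁽⁰⁾)` steps: `A x⁽ᵏ⁾ = b` if and only if `k ≥ ν(A, r⁽⁰⁾)`. -/
theorem stmt0 (n : ℕ) (hn : 0 < n) (A : Matrix (Fin n) (Fin n) ℝ)
    (hA : IsUnit A.det) (b : Fin n → ℝ) (x : ℕ → (Fin n → ℝ))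
    (hr0 : b - A *ᵥ x 0 ≠ 0) (hx : IsGMRES A b x) :
    ∀ k : ℕ, A *ᵥ x k = b ↔ krylovGrade A (b - A *ᵥ x 0) ≤ k := by
  set r0 : Fin n → ℝ := b - A *ᵥ x 0 with hr0def
  set S : Set ℕ := {ℓ : ℕ | ∃ P : Polynomial ℝ, P ≠ 0 ∧ P.natDegree = ℓ ∧
    (Polynomial.aeval A P) *ᵥ r0 = 0} with hSdef
  have hgrade : krylovGrade A r0 = sInf S := rfl
  -- A is invertible, mulVec injective
  have hAinv : Invertible A := (Matrix.isUnit_iff_isUnit_det A |>.mpr hA).invertible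
  have hinj : Function.Injective A.mulVec := Matrix.mulVec_injective_of_invertible A
  -- S is nonempty
  have hSne : S.Nonempty := by
    refine ⟨A.charpoly.natDegree, A.charpoly, (A.charpoly_monic).ne_zero, rfl, ?_⟩
    rw [Matrix.aeval_self_charpoly]; simp
  set ν : ℕ := sInf S with hν
  obtain ⟨P, hPne, hPdeg, hPann⟩ : ν ∈ S := Nat.sInf_mem hSne
  -- ν ≥ 1
  have hν1 : 1 ≤ ν := by
    by_contra h
    push_neg at h
    interval_cases ν
    have hP : P = C (P.coeff 0) := eq_C_of_natDegree_eq_zero hPdeg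
    have hc : P.coeff 0 ≠ 0 := fun h0 => hPne (by rw [hP, h0, map_zero])
    rw [hP] at hPann
    rw [Polynomial.aeval_C, Algebra.algebraMap_eq_smul_one,
      Matrix.smul_mulVec, Matrix.one_mulVec] at hPann
    exact hr0 (by simpa [hc] using smul_eq_zero.mp hPann)
  -- constant coefficient of P is nonzero
  have hc0 : P.coeff 0 ≠ 0 := by
    intro h0
    obtain ⟨Q, hQ⟩ := Polynomial.X_dvd_iff.mpr h0
    have hQne : Q ≠ 0 := fun h => hPne (by rw [hQ, h, mul_zero])
    have hdeg : ν = 1 + Q.natDegree := by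
      rw [← hPdeg, hQ, Polynomial.natDegree_mul Polynomial.X_ne_zero hQne,
        Polynomial.natDegree_X]
    have hQann : (Polynomial.aeval A Q) *ᵥ r0 = 0 := by
      have : A *ᵥ ((Polynomial.aeval A Q) *ᵥ r0) = A *ᵥ 0 := by
        rw [Matrix.mulVec_mulVec, Matrix.mulVec_zero]
        rw [hQ, _root_.map_mul, Polynomial.aeval_X] at hPann
        exact hPann
      exact hinj this
    have : ν ≤ Q.natDegree := Nat.sInf_le ⟨Q, hQne, rfl, hQann⟩
    omega
  -- the key vector z with A z = r0, z ∈ krylov ν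
  set w : Fin n → ℝ := (Polynomial.aeval A P.divX) *ᵥ r0 with hw
  have hkey : A *ᵥ w + (P.coeff 0) • r0 = 0 := by
    have := Polynomial.X_mul_divX_add P
    calc A *ᵥ w + (P.coeff 0) • r0
        = (Polynomial.aeval A (X * P.divX + C (P.coeff 0))) *ᵥ r0 := by
          rw [map_add, _root_.map_mul, Polynomial.aeval_X, Polynomial.aeval_C,
            Matrix.add_mulVec, ← Matrix.mulVec_mulVec,
            Algebra.algebraMap_eq_smul_one, Matrix.smul_mulVec,
            Matrix.one_mulVec]
      _ = 0 := by rw [this]; exact hPann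
  set z : Fin n → ℝ := (-(P.coeff 0)⁻¹) • w with hz
  have hAz : A *ᵥ z = r0 := by
    rw [hz, Matrix.mulVec_smul]
    have hAw : A *ᵥ w = -((P.coeff 0) • r0) := by
      rw [eq_neg_iff_add_eq_zero]; exact hkey
    rw [hAw, smul_neg, neg_smul, neg_neg, smul_smul, inv_mul_cancel₀ hc0, one_smul]
  have hzmem : z ∈ krylov A r0 ν := by
    have : z = (Polynomial.aeval A ((-(P.coeff 0)⁻¹) • P.divX)) *ᵥ r0 := by
      rw [_root_.map_smul, Matrix.smul_mulVec, hz, hw]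
    rw [this]
    apply mem_krylov_of_poly
    intro i hi
    have hlt : P.natDegree < i + 1 := by rw [hPdeg]; omega
    rw [Polynomial.coeff_smul, Polynomial.coeff_divX,
      Polynomial.coeff_eq_zero_of_natDegree_lt hlt, smul_zero]
  intro k
  constructor
  · -- A x k = b → ν ≤ k
    intro hxk
    by_contra hk
    push_neg at hk
    rcases Nat.eq_zero_or_pos k with hk0 | hk1
    · subst hk0
      exact hr0 (by rw [hr0def, hxk, sub_self])
    · obtain ⟨⟨z', hz'mem, hz'eq⟩, _⟩ := hx k hk1
      have hAz' : A *ᵥ z' = r0 := by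
        rw [hr0def]
        have : A *ᵥ x k = A *ᵥ x 0 + A *ᵥ z' := by rw [hz'eq, Matrix.mulVec_add]
        rw [hxk] at this
        rw [this]
        abel
      obtain ⟨Q, hQcoeff, hQeq⟩ := poly_of_mem_krylov A r0 k z' hz'mem
      set P' : Polynomial ℝ := X * Q - 1 with hP'
      have hP'ne : P' ≠ 0 := by
        intro h
        have : P'.coeff 0 = 0 := by rw [h]; simp
        rw [hP'] at this
        simp [Polynomial.coeff_sub, Polynomial.mul_coeff_zero] at this
      have hP'ann : (Polynomial.aeval A P') *ᵥ r0 = 0 := by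
        rw [hP', map_sub, _root_.map_mul, Polynomial.aeval_X, Polynomial.aeval_one,
          Matrix.sub_mulVec, Matrix.one_mulVec, ← Matrix.mulVec_mulVec,
          ← hQeq, hAz', sub_self]
      have hP'deg : P'.natDegree ≤ k := by
        rw [Polynomial.natDegree_le_iff_coeff_eq_zero]
        intro m hm
        obtain ⟨m, rfl⟩ : ∃ m', m = m' + 1 := ⟨m - 1, by omega⟩
        rw [hP', Polynomial.coeff_sub, Polynomial.coeff_X_mul,
          hQcoeff m (by omega), Polynomial.coeff_one]
        simp
      have : ν ≤ P'.natDegree := Nat.sInf_le ⟨P', hP'ne, rfl, hP'ann⟩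
      omega
  · -- ν ≤ k → A x k = b
    intro hk
    obtain ⟨_, hmin⟩ := hx k (le_trans hν1 hk)
    have hy : l2norm (b - A *ᵥ x k) ≤ l2norm (b - A *ᵥ (x 0 + z)) :=
      hmin _ ⟨z, krylov_mono A r0 hk hzmem, rfl⟩
    have : b - A *ᵥ (x 0 + z) = 0 := by
      rw [Matrix.mulVec_add, hAz]
      rw [hr0def]
      abel
    rw [this] at hy
    have h0 : l2norm (0 : Fin n → ℝ) = 0 := by simp [l2norm]
    rw [h0] at hy
    have := l2norm_eq_zero' (le_antisymm hy (l2norm_nonneg' _))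
    rw [sub_eq_zero] at this
    exact this.symm
end

section
/- Let A be a nonsingular real n×n matrix, b ∈ ℝⁿ, β a nonzero real number, g(x) = (Iₙ − βA)x + βb and f = g − id. Run the DIIS with full history (m_k = k for all k) and the GMRES method from the same initial point x⁽⁰⁾. Let k ≥ 1 and suppose the GMRES residual norms do not stagnate before step k, i.e. r_GMRES^{(k−1)} ≠ 0 and ‖r_GMRES^{(j−1)}‖₂ > ‖r_GMRES^{(j)}‖₂ for every integer j with 0 < j < k. Then the DIIS iterates x_DIIS^{(0)}, …, x_DIIS^{(k)} are well defined, the DIIS extrapolation coefficients c⁽ᵏ⁾ ∈ ℝ^{k+1} at step k exist and are unique, and one has x_GMRES^{(k)} = Σ_{i=0}^{k} c_i^{(k)} x_DIIS^{(i)} as well as x_DIIS^{(k+1)} = g(x_GMRES^{(k)}). -/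
open Matrix

/-- `(x, c)` is a run of the DIIS with full history (`m_k = k`) for the fixed-point function
`g` and the error function `f`: at each step `k`, the coefficients `c k` minimize
`‖Σ_{i=0}^{k} cᵢ f(xⁱ)‖₂` subject to `Σ cᵢ = 1`, and `x (k+1) = Σ_{i=0}^{k} cᵢ g(xⁱ)`. -/
def IsDIIS {n : ℕ} (g f : (Fin n → ℝ) → (Fin n → ℝ))
    (x : ℕ → (Fin n → ℝ)) (c : ℕ → ℕ → ℝ) : Prop :=
  ∀ k : ℕ,
    (∑ i ∈ Finset.range (k + 1), c k i) = 1 ∧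
    (∀ d : ℕ → ℝ, (∑ i ∈ Finset.range (k + 1), d i) = 1 →
      l2norm (∑ i ∈ Finset.range (k + 1), c k i • f (x i)) ≤
        l2norm (∑ i ∈ Finset.range (k + 1), d i • f (x i))) ∧
    x (k + 1) = ∑ i ∈ Finset.range (k + 1), c k i • g (x i)

namespace DIISaux

variable {n : ℕ}

/-! ### Dot product and `l2norm` basics -/

/-- Euclidean dot product on plain `Fin n → ℝ`. -/
def dot (u v : Fin n → ℝ) : ℝ := ∑ i, u i * v i

lemma dot_comm (u v : Fin n → ℝ) : dot u v = dot v u := by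
  unfold dot; exact Finset.sum_congr rfl fun i _ => mul_comm _ _

lemma dot_add_right (u v w : Fin n → ℝ) : dot u (v + w) = dot u v + dot u w := by
  unfold dot; rw [← Finset.sum_add_distrib]
  exact Finset.sum_congr rfl fun i _ => by simp [Pi.add_apply, mul_add]

lemma dot_add_left (u v w : Fin n → ℝ) : dot (u + v) w = dot u w + dot v w := by
  rw [dot_comm, dot_add_right, dot_comm w u, dot_comm w v]

lemma dot_sub_left (u v w : Fin n → ℝ) : dot (u - v) w = dot u w - dot v w := by
  unfold dot; rw [← Finset.sum_sub_distrib]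
  exact Finset.sum_congr rfl fun i _ => by simp [Pi.sub_apply, sub_mul]

lemma dot_smul_right (t : ℝ) (u v : Fin n → ℝ) : dot u (t • v) = t * dot u v := by
  unfold dot; rw [Finset.mul_sum]
  exact Finset.sum_congr rfl fun i _ => by simp [Pi.smul_apply, smul_eq_mul]; ring

lemma dot_smul_left (t : ℝ) (u v : Fin n → ℝ) : dot (t • u) v = t * dot u v := by
  rw [dot_comm, dot_smul_right, dot_comm]

lemma dot_zero_right (u : Fin n → ℝ) : dot u 0 = 0 := by simp [dot]

lemma dot_self_nonneg (u : Fin n → ℝ) : 0 ≤ dot u u :=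
  Finset.sum_nonneg fun i _ => mul_self_nonneg _

lemma dot_self_eq_zero {u : Fin n → ℝ} (h : dot u u = 0) : u = 0 := by
  funext i
  have h2 : ∀ j ∈ Finset.univ, (0:ℝ) ≤ u j * u j := fun j _ => mul_self_nonneg _
  have := (Finset.sum_eq_zero_iff_of_nonneg h2).1 h i (Finset.mem_univ i)
  have := mul_self_eq_zero.1 this
  simpa using this

lemma l2norm_eq_sqrt_dot (v : Fin n → ℝ) : l2norm v = Real.sqrt (dot v v) := by
  unfold l2norm dot
  congr 1
  exact Finset.sum_congr rfl fun i _ => sq (v i)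

lemma l2norm_le_iff {u v : Fin n → ℝ} : l2norm u ≤ l2norm v ↔ dot u u ≤ dot v v := by
  rw [l2norm_eq_sqrt_dot, l2norm_eq_sqrt_dot]
  exact Real.sqrt_le_sqrt_iff (dot_self_nonneg v)

lemma l2norm_lt_iff {u v : Fin n → ℝ} : l2norm u < l2norm v ↔ dot u u < dot v v := by
  rw [l2norm_eq_sqrt_dot, l2norm_eq_sqrt_dot]
  exact Real.sqrt_lt_sqrt_iff (dot_self_nonneg u)

lemma l2norm_zero : l2norm (0 : Fin n → ℝ) = 0 := by
  simp [l2norm]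

lemma l2norm_eq_zero {u : Fin n → ℝ} (h : l2norm u ≤ 0) : u = 0 := by
  rw [l2norm_eq_sqrt_dot] at h
  have h0 : Real.sqrt (dot u u) = 0 := le_antisymm h (Real.sqrt_nonneg _)
  exact dot_self_eq_zero (le_antisymm (Real.sqrt_eq_zero'.1 h0) (dot_self_nonneg u))

lemma l2norm_smul_le_iff {β : ℝ} (hβ : β ≠ 0) {u v : Fin n → ℝ} :
    l2norm (β • u) ≤ l2norm (β • v) ↔ l2norm u ≤ l2norm v := by
  rw [l2norm_le_iff, l2norm_le_iff, dot_smul_left, dot_smul_right, dot_smul_left,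
    dot_smul_right, ← mul_assoc, ← mul_assoc]
  exact mul_le_mul_iff_right₀ (mul_self_pos.2 hβ)

/-! ### Minimization over affine subspaces -/

lemma orth_min {W : Submodule ℝ (Fin n → ℝ)} {u : Fin n → ℝ}
    (h : ∀ w ∈ W, dot u w = 0) : ∀ w ∈ W, l2norm u ≤ l2norm (u + w) := by
  intro w hw
  rw [l2norm_le_iff, dot_add_right, dot_add_left, dot_add_left, h w hw, dot_comm w u, h w hw]
  have := dot_self_nonneg w
  linarith

lemma min_orth {W : Submodule ℝ (Fin n → ℝ)} {u : Fin n → ℝ}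
    (h : ∀ w ∈ W, l2norm u ≤ l2norm (u + w)) : ∀ w ∈ W, dot u w = 0 := by
  intro w hw
  by_contra hc
  have hq : 0 < dot w w := by
    rcases lt_or_eq_of_le (dot_self_nonneg w) with h' | h'
    · exact h'
    · exact absurd (by rw [dot_self_eq_zero h'.symm, dot_zero_right] : dot u w = 0) hc
  have h1 := l2norm_le_iff.1 (h ((-(dot u w)/(dot w w)) • w) (W.smul_mem _ hw))
  rw [dot_add_right, dot_add_left, dot_add_left, dot_smul_right, dot_smul_left,
    dot_smul_left, dot_smul_right, dot_comm w u] at h1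
  have key : -(dot u w)/(dot w w) * dot u w + (-(dot u w)/(dot w w) * dot u w +
      -(dot u w)/(dot w w) * (-(dot u w)/(dot w w) * dot w w)) = -((dot u w)^2/(dot w w)) := by
    field_simp; ring
  have hc2 : 0 < (dot u w)^2/(dot w w) := div_pos (by positivity) hq
  linarith

lemma min_unique {W : Submodule ℝ (Fin n → ℝ)} {u₁ u₂ : Fin n → ℝ}
    (h1 : ∀ w ∈ W, dot u₁ w = 0) (h2 : ∀ w ∈ W, dot u₂ w = 0)
    (h : u₁ - u₂ ∈ W) : u₁ = u₂ := by
  have hz : dot (u₁ - u₂) (u₁ - u₂) = 0 := by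
    rw [dot_sub_left, h1 _ h, h2 _ h]; ring
  exact sub_eq_zero.1 (dot_self_eq_zero hz)

lemma exists_orth (W : Submodule ℝ (Fin n → ℝ)) (u : Fin n → ℝ) :
    ∃ w ∈ W, ∀ w' ∈ W, dot (u + w) w' = 0 := by
  classical
  let φ : (Fin n → ℝ) ≃ₗ[ℝ] EuclideanSpace ℝ (Fin n) :=
    (WithLp.linearEquiv 2 ℝ (Fin n → ℝ)).symm
  let W' : Submodule ℝ (EuclideanSpace ℝ (Fin n)) := W.map φ.toLinearMap
  have hdot : ∀ a b : Fin n → ℝ, dot a b = inner ℝ (φ a) (φ b) := by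
    intro a b
    simp only [PiLp.inner_apply, RCLike.inner_apply, conj_trivial]
    rw [dot_comm]; rfl
  let p : EuclideanSpace ℝ (Fin n) := W'.orthogonalProjectionOnto (φ (-u))
  have hp : (p : EuclideanSpace ℝ (Fin n)) ∈ W' := (W'.orthogonalProjectionOnto (φ (-u))).2
  refine ⟨φ.symm p, ?_, ?_⟩
  · rcases Submodule.mem_map.1 hp with ⟨w, hw, hwp⟩
    rw [← hwp]; show φ.symm (φ w) ∈ W; rw [LinearEquiv.symm_apply_apply]; exact hw
  · intro w' hw'
    have horth : inner ℝ (φ (-u) - (p : EuclideanSpace ℝ (Fin n))) (φ w') = 0 :=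
      Submodule.starProjection_inner_eq_zero (K := W') (φ (-u)) (φ w')
      (Submodule.mem_map_of_mem hw')
    rw [hdot]
    have hφ : φ (u + φ.symm p) = -(φ (-u) - p) := by
      rw [map_add, map_neg, LinearEquiv.apply_symm_apply]; abel
    rw [hφ, inner_neg_left, horth, neg_zero]

/-! ### Existence of constrained minimizing coefficients -/

lemma affine_comb (m : ℕ) (q : ℕ → Fin n → ℝ) (e : ℕ → ℝ)
    (he : (∑ i ∈ Finset.range (m+1), e i) = 1) :
    ∑ i ∈ Finset.range (m+1), e i • q i
      = q 0 + ∑ i ∈ Finset.range (m+1), e i • (q i - q 0) := by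
  have : ∑ i ∈ Finset.range (m+1), e i • (q i - q 0)
      = (∑ i ∈ Finset.range (m+1), e i • q i) - (∑ i ∈ Finset.range (m+1), e i) • q 0 := by
    rw [Finset.sum_smul, ← Finset.sum_sub_distrib]
    exact Finset.sum_congr rfl fun i _ => smul_sub _ _ _
  rw [this, he, one_smul]; abel

lemma exists_coeffs (m : ℕ) (p : ℕ → Fin n → ℝ) :
    ∃ d : ℕ → ℝ, (∑ i ∈ Finset.range (m+1), d i) = 1 ∧
      ∀ e : ℕ → ℝ, (∑ i ∈ Finset.range (m+1), e i) = 1 →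
        l2norm (∑ i ∈ Finset.range (m+1), d i • p i) ≤
          l2norm (∑ i ∈ Finset.range (m+1), e i • p i) := by
  classical
  set W : Submodule ℝ (Fin n → ℝ) :=
    Submodule.span ℝ (Set.range (fun i : Fin (m+1) => p i - p 0)) with hW
  obtain ⟨w, hwW, hworth⟩ := exists_orth W (p 0)
  obtain ⟨t, htw⟩ := (Submodule.mem_span_range_iff_exists_fun ℝ).1 hwW
  set t' : ℕ → ℝ := fun i => if h : i < m+1 then t ⟨i, h⟩ else 0 with ht'
  set d : ℕ → ℝ := fun i => t' i + (if i = 0 then 1 - (∑ j ∈ Finset.range (m+1), t' j) else 0)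
    with hd
  have hdsum : (∑ i ∈ Finset.range (m+1), d i) = 1 := by
    rw [hd, Finset.sum_add_distrib, Finset.sum_ite_eq' (Finset.range (m+1)) 0]
    simp [Finset.mem_range]
  have hmem : ∀ (e : ℕ → ℝ), (∑ i ∈ Finset.range (m+1), e i • (p i - p 0)) ∈ W := by
    intro e
    refine Submodule.sum_mem _ fun i hi => Submodule.smul_mem _ _ ?_
    rw [Finset.mem_range] at hi
    exact Submodule.subset_span ⟨⟨i, hi⟩, rfl⟩
  have hsum_t' : ∑ i ∈ Finset.range (m+1), t' i • (p i - p 0) = w := by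
    rw [← htw, ← Fin.sum_univ_eq_sum_range (fun i => t' i • (p i - p 0)) (m+1)]
    refine Finset.sum_congr rfl fun i _ => ?_
    rw [ht']; simp [i.isLt]
  have hdw : ∑ i ∈ Finset.range (m+1), d i • (p i - p 0) = w := by
    rw [hd]
    have : ∀ i ∈ Finset.range (m+1),
        (t' i + (if i = 0 then 1 - (∑ j ∈ Finset.range (m+1), t' j) else 0)) • (p i - p 0)
        = t' i • (p i - p 0)
          + (if i = 0 then (1 - (∑ j ∈ Finset.range (m+1), t' j)) • (p i - p 0) else 0) := by
      intro i _
      by_cases h : i = 0 <;> simp [h, add_smul]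
    rw [Finset.sum_congr rfl this, Finset.sum_add_distrib,
      Finset.sum_ite_eq' (Finset.range (m+1)) 0]
    simp [hsum_t']
  refine ⟨d, hdsum, fun e he => ?_⟩
  rw [affine_comb m p e he, affine_comb m p d hdsum, hdw]
  have : p 0 + ∑ i ∈ Finset.range (m+1), e i • (p i - p 0)
      = (p 0 + w) + ((∑ i ∈ Finset.range (m+1), e i • (p i - p 0)) - w) := by abel
  rw [this]
  exact orth_min hworth _ (Submodule.sub_mem _ (hmem e) hwW)

/-! ### Construction of a DIIS run -/

/-- choose minimizing coefficients -/
noncomputable def chooseD (m : ℕ) (p : ℕ → Fin n → ℝ) : ℕ → ℝ :=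
  Classical.choose (exists_coeffs m p)

lemma chooseD_spec (m : ℕ) (p : ℕ → Fin n → ℝ) :
    (∑ i ∈ Finset.range (m+1), chooseD m p i) = 1 ∧
      ∀ e : ℕ → ℝ, (∑ i ∈ Finset.range (m+1), e i) = 1 →
        l2norm (∑ i ∈ Finset.range (m+1), chooseD m p i • p i) ≤
          l2norm (∑ i ∈ Finset.range (m+1), e i • p i) :=
  Classical.choose_spec (exists_coeffs m p)

noncomputable def diisSeq (g f : (Fin n → ℝ) → (Fin n → ℝ)) (x0 : Fin n → ℝ) : ℕ → Fin n → ℝ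
  | 0 => x0
  | (m+1) =>
    let q : ℕ → (Fin n → ℝ) × (Fin n → ℝ) := fun i =>
      if h : i < m + 1 then (f (diisSeq g f x0 i), g (diisSeq g f x0 i)) else 0
    ∑ i ∈ Finset.range (m+1), (chooseD m (fun j => (q j).1)) i • (q i).2
  decreasing_by exact h

noncomputable def diisC (g f : (Fin n → ℝ) → (Fin n → ℝ)) (x0 : Fin n → ℝ) (m : ℕ) : ℕ → ℝ :=
  chooseD m (fun i => if i < m + 1 then f (diisSeq g f x0 i) else 0)

lemma diisSeq_zero (g f : (Fin n → ℝ) → (Fin n → ℝ)) (x0 : Fin n → ℝ) :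
    diisSeq g f x0 0 = x0 := by rw [diisSeq]

lemma diisSeq_succ (g f : (Fin n → ℝ) → (Fin n → ℝ)) (x0 : Fin n → ℝ) (m : ℕ) :
    diisSeq g f x0 (m+1)
      = ∑ i ∈ Finset.range (m+1), diisC g f x0 m i • g (diisSeq g f x0 i) := by
  rw [diisSeq, diisC]
  refine Finset.sum_congr rfl fun i hi => ?_
  rw [Finset.mem_range] at hi
  congr 1
  · congr 1
    funext j
    by_cases h : j < m + 1 <;> simp [h]
  · simp [hi]

lemma diis_isDIIS (g f : (Fin n → ℝ) → (Fin n → ℝ)) (x0 : Fin n → ℝ) :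
    IsDIIS g f (diisSeq g f x0) (diisC g f x0) := by
  intro m
  obtain ⟨h1, h2⟩ := chooseD_spec m (fun i => if i < m + 1 then f (diisSeq g f x0 i) else 0)
  refine ⟨h1, fun d hd => ?_, diisSeq_succ g f x0 m⟩
  have hrw : ∀ (e : ℕ → ℝ), ∑ i ∈ Finset.range (m+1),
      e i • (if i < m + 1 then f (diisSeq g f x0 i) else 0)
      = ∑ i ∈ Finset.range (m+1), e i • f (diisSeq g f x0 i) := by
    intro e
    refine Finset.sum_congr rfl fun i hi => ?_
    rw [Finset.mem_range] at hi
    simp [hi]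
  have := h2 d hd
  rwa [hrw, hrw] at this

/-! ### Krylov space lemmas -/

variable (A : Matrix (Fin n) (Fin n) ℝ) (v : Fin n → ℝ)

lemma krylov_mono {j j' : ℕ} (h : j ≤ j') : krylov A v j ≤ krylov A v j' :=
  Submodule.span_mono fun w ⟨i, hi, hw⟩ => ⟨i, lt_of_lt_of_le hi h, hw⟩

lemma krylov_zero : krylov A v 0 = ⊥ := by
  rw [krylov]
  convert Submodule.span_empty (R := ℝ) (M := Fin n → ℝ)
  ext w; simp

lemma pow_mulVec_mem_krylov {i j : ℕ} (h : i < j) : (A ^ i) *ᵥ v ∈ krylov A v j :=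
  Submodule.subset_span ⟨i, h, rfl⟩

lemma self_mem_krylov {j : ℕ} (h : 1 ≤ j) : v ∈ krylov A v j := by
  have := pow_mulVec_mem_krylov A v (h : 0 < j)
  rwa [pow_zero, one_mulVec] at this

lemma mulVec_mem_krylov_succ {j : ℕ} {z : Fin n → ℝ} (hz : z ∈ krylov A v j) :
    A *ᵥ z ∈ krylov A v (j+1) := by
  induction hz using Submodule.span_induction with
  | mem w hw =>
    obtain ⟨i, hi, rfl⟩ := hw
    rw [mulVec_mulVec, ← pow_succ']
    exact pow_mulVec_mem_krylov A v (by omega)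
  | zero => rw [mulVec_zero]; exact Submodule.zero_mem _
  | add a b _ _ ha hb => rw [mulVec_add]; exact Submodule.add_mem _ ha hb
  | smul t a _ ha => rw [mulVec_smul]; exact Submodule.smul_mem _ t ha

lemma krylov_succ_le (j : ℕ) :
    krylov A v (j+1) ≤ krylov A v j ⊔ Submodule.span ℝ {(A ^ j) *ᵥ v} := by
  rw [krylov, Submodule.span_le]
  rintro w ⟨i, hi, rfl⟩
  rcases Nat.lt_succ_iff_lt_or_eq.1 hi with h | h
  · exact Submodule.mem_sup_left (pow_mulVec_mem_krylov A v h)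
  · subst h
    exact Submodule.mem_sup_right (Submodule.mem_span_singleton_self _)

lemma krylov_decomp {j : ℕ} {z : Fin n → ℝ} (hz : z ∈ krylov A v (j+1)) :
    ∃ α : ℝ, ∃ u ∈ krylov A v j, z = α • v + A *ᵥ u := by
  induction hz using Submodule.span_induction with
  | mem w hw =>
    obtain ⟨i, hi, rfl⟩ := hw
    cases i with
    | zero => exact ⟨1, 0, Submodule.zero_mem _, by rw [pow_zero, one_mulVec, one_smul,
        mulVec_zero, add_zero]⟩
    | succ i' =>
      refine ⟨0, (A ^ i') *ᵥ v, pow_mulVec_mem_krylov A v (by omega), ?_⟩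
      rw [zero_smul, zero_add, mulVec_mulVec, ← pow_succ']
  | zero => exact ⟨0, 0, Submodule.zero_mem _, by simp⟩
  | add a b _ _ ha hb =>
    obtain ⟨α, u, hu, rfl⟩ := ha
    obtain ⟨α', u', hu', rfl⟩ := hb
    refine ⟨α + α', u + u', Submodule.add_mem _ hu hu', ?_⟩
    rw [mulVec_add, add_smul]; abel
  | smul t a _ ha =>
    obtain ⟨α, u, hu, rfl⟩ := ha
    refine ⟨t * α, t • u, Submodule.smul_mem _ t hu, ?_⟩
    rw [mulVec_smul, smul_add, smul_smul]

lemma mulVec_injective (hA : IsUnit A.det) : Function.Injective (fun x => A *ᵥ x) := by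
  intro x y hxy
  simp only at hxy
  have h1 : A⁻¹ *ᵥ (A *ᵥ x) = A⁻¹ *ᵥ (A *ᵥ y) := by rw [hxy]
  rwa [mulVec_mulVec, mulVec_mulVec, Matrix.nonsing_inv_mul A hA, one_mulVec, one_mulVec] at h1

/-! ### Residual algebra -/

lemma mulVec_sum (m : ℕ) (u : ℕ → Fin n → ℝ) :
    A *ᵥ (∑ i ∈ Finset.range m, u i) = ∑ i ∈ Finset.range m, A *ᵥ u i := by
  induction m with
  | zero => simp
  | succ m ih => rw [Finset.sum_range_succ, Finset.sum_range_succ, mulVec_add, ih]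

lemma sum_residual (b : Fin n → ℝ) (m : ℕ) (q : ℕ → Fin n → ℝ) (e : ℕ → ℝ)
    (he : (∑ i ∈ Finset.range (m+1), e i) = 1) :
    ∑ i ∈ Finset.range (m+1), e i • (b - A *ᵥ q i)
      = b - A *ᵥ (∑ i ∈ Finset.range (m+1), e i • q i) := by
  rw [mulVec_sum]
  have h1 : ∀ i ∈ Finset.range (m+1), e i • (b - A *ᵥ q i)
      = e i • b - A *ᵥ (e i • q i) := by
    intro i _
    rw [smul_sub, mulVec_smul]
  rw [Finset.sum_congr rfl h1, Finset.sum_sub_distrib, ← Finset.sum_smul, he, one_smul]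

/-- Minimizers of the residual norm over an affine subspace `x0 + K` coincide. -/
lemma minimizers_eq (hA : IsUnit A.det) (b x0 : Fin n → ℝ) (K : Submodule ℝ (Fin n → ℝ))
    {y₁ y₂ : Fin n → ℝ} (h₁ : y₁ - x0 ∈ K) (h₂ : y₂ - x0 ∈ K)
    (m₁ : ∀ z ∈ K, l2norm (b - A *ᵥ y₁) ≤ l2norm (b - A *ᵥ (x0 + z)))
    (m₂ : ∀ z ∈ K, l2norm (b - A *ᵥ y₂) ≤ l2norm (b - A *ᵥ (x0 + z))) : y₁ = y₂ := by
  set W : Submodule ℝ (Fin n → ℝ) := K.map A.mulVecLin with hWdef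
  have horth : ∀ (y : Fin n → ℝ), y - x0 ∈ K →
      (∀ z ∈ K, l2norm (b - A *ᵥ y) ≤ l2norm (b - A *ᵥ (x0 + z))) →
      ∀ w ∈ W, dot (b - A *ᵥ y) w = 0 := by
    intro y hy hmin
    refine min_orth fun w hw => ?_
    rcases Submodule.mem_map.1 hw with ⟨u', hu', rfl⟩
    have hcand : (y - x0) - u' ∈ K := Submodule.sub_mem _ hy hu'
    have := hmin _ hcand
    have heq : b - A *ᵥ (x0 + ((y - x0) - u')) = (b - A *ᵥ y) + A.mulVecLin u' := by
      rw [Matrix.mulVecLin_apply, mulVec_add, mulVec_sub, mulVec_sub]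
      abel
    rwa [heq] at this
  have o₁ := horth y₁ h₁ m₁
  have o₂ := horth y₂ h₂ m₂
  have hsub : (b - A *ᵥ y₁) - (b - A *ᵥ y₂) ∈ W := by
    have : (b - A *ᵥ y₁) - (b - A *ᵥ y₂) = A.mulVecLin ((y₂ - x0) - (y₁ - x0)) := by
      rw [Matrix.mulVecLin_apply, mulVec_sub, mulVec_sub, mulVec_sub]
      abel
    rw [this]
    exact Submodule.mem_map_of_mem (Submodule.sub_mem _ h₂ h₁)
  have := min_unique o₁ o₂ hsub
  have hAy : A *ᵥ y₁ = A *ᵥ y₂ := by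
    funext i
    have h' := congrFun this i
    simp only [Pi.sub_apply] at h'
    linarith
  exact mulVec_injective A hA hAy

end DIISaux
-- appended content (tested with axioms replacing infra)
namespace DIISaux

lemma dot_sub_right {n : ℕ} (u v w : Fin n → ℝ) : dot u (v - w) = dot u v - dot u w := by
  rw [dot_comm, dot_sub_left, dot_comm v u, dot_comm w u]

lemma key_main {n : ℕ} (A : Matrix (Fin n) (Fin n) ℝ) (hA : IsUnit A.det) (b : Fin n → ℝ)
    (β : ℝ) (hβ : β ≠ 0) (xG : ℕ → (Fin n → ℝ)) (hG : IsGMRES A b xG)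
    (k : ℕ) (hk : 1 ≤ k)
    (hstag1 : b - A *ᵥ xG (k - 1) ≠ 0)
    (hstag2 : ∀ j, 0 < j → j < k →
      l2norm (b - A *ᵥ xG j) < l2norm (b - A *ᵥ xG (j - 1)))
    (xD : ℕ → (Fin n → ℝ)) (c : ℕ → ℕ → ℝ) (hx0 : xD 0 = xG 0)
    (hD : IsDIIS (fun v => v + β • (b - A *ᵥ v)) (fun v => β • (b - A *ᵥ v)) xD c) :
    (∀ d : ℕ → ℝ, (∑ i ∈ Finset.range (k + 1), d i) = 1 →
      (∀ e : ℕ → ℝ, (∑ i ∈ Finset.range (k + 1), e i) = 1 →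
        l2norm (∑ i ∈ Finset.range (k + 1), d i • (β • (b - A *ᵥ xD i))) ≤
          l2norm (∑ i ∈ Finset.range (k + 1), e i • (β • (b - A *ᵥ xD i)))) →
      ∀ i ≤ k, d i = c k i) ∧
    xG k = ∑ i ∈ Finset.range (k + 1), c k i • xD i ∧
    xD (k + 1) = (fun v => v + β • (b - A *ᵥ v)) (xG k) := by
  classical
  set r0 : Fin n → ℝ := b - A *ᵥ xG 0 with hr0
  -- GMRES decomposition
  have hzG : ∀ j : ℕ, ∃ z ∈ krylov A r0 j, xG j = xG 0 + z := by
    intro j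
    cases j with
    | zero => exact ⟨0, Submodule.zero_mem _, by rw [add_zero]⟩
    | succ j' => exact (hG (j'+1) (Nat.succ_le_succ (Nat.zero_le _))).1
  choose zG hzGmem hzGeq using hzG
  -- GMRES minimality over the affine space
  have hGmin : ∀ j, ∀ z ∈ krylov A r0 j,
      l2norm (b - A *ᵥ xG j) ≤ l2norm (b - A *ᵥ (xG 0 + z)) := by
    intro j z hz
    cases j with
    | zero =>
      rw [krylov_zero, Submodule.mem_bot] at hz
      subst hz
      rw [add_zero]
    | succ j' => exact (hG (j'+1) (Nat.succ_le_succ (Nat.zero_le _))).2 _ ⟨z, hz, rfl⟩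
  -- residual formula
  have hres : ∀ j, b - A *ᵥ xG j = r0 - A *ᵥ zG j := by
    intro j
    conv_lhs => rw [hzGeq j]
    rw [mulVec_add, hr0]
    abel
  -- nonzero residuals before step k
  have hne0 : ∀ j, j < k → b - A *ᵥ xG j ≠ 0 := by
    intro j hj h0
    have hle : l2norm (b - A *ᵥ xG (k-1)) ≤ l2norm (b - A *ᵥ (xG 0 + zG j)) :=
      hGmin (k-1) (zG j) (krylov_mono A r0 (by omega) (hzGmem j))
    rw [← hzGeq j, h0, l2norm_zero] at hle
    exact hstag1 (l2norm_eq_zero hle)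
  -- orthogonality of residuals
  have horth : ∀ j, ∀ u ∈ krylov A r0 j, dot (b - A *ᵥ xG j) (A *ᵥ u) = 0 := by
    intro j u hu
    have hmap : ∀ w ∈ (krylov A r0 j).map A.mulVecLin, dot (b - A *ᵥ xG j) w = 0 := by
      refine min_orth fun w hw => ?_
      rcases Submodule.mem_map.1 hw with ⟨u', hu', rfl⟩
      have hcand := hGmin j (zG j - u') (Submodule.sub_mem _ (hzGmem j) hu')
      have heq : b - A *ᵥ (xG 0 + (zG j - u')) = (b - A *ᵥ xG j) + A.mulVecLin u' := by
        rw [Matrix.mulVecLin_apply, mulVec_add, mulVec_sub, hres j, hr0]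
        abel
      rwa [heq] at hcand
    exact hmap _ (Submodule.mem_map_of_mem hu)
  -- the key non-stagnation lemma: the residual escapes the Krylov space
  have hKL : ∀ j, j < k → (b - A *ᵥ xG j) ∉ krylov A r0 j := by
    intro j hjk hmem
    cases j with
    | zero =>
      rw [krylov_zero, Submodule.mem_bot] at hmem
      exact hne0 0 hjk hmem
    | succ j' =>
      obtain ⟨α, u, hu, hdec⟩ := krylov_decomp A r0 hmem
      have hrne : b - A *ᵥ xG (j'+1) ≠ 0 := hne0 _ hjk
      have hdotr : dot (b - A *ᵥ xG (j'+1)) (b - A *ᵥ xG (j'+1)) ≠ 0 :=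
        fun h => hrne (dot_self_eq_zero h)
      have d1 : dot (b - A *ᵥ xG (j'+1)) (A *ᵥ zG (j'+1)) = 0 := horth (j'+1) _ (hzGmem _)
      have d2 : dot (b - A *ᵥ xG (j'+1)) (A *ᵥ u) = 0 :=
        horth (j'+1) u (krylov_mono A r0 (Nat.le_succ j') hu)
      have d3 : dot (b - A *ᵥ xG j') (A *ᵥ u) = 0 := horth j' u hu
      have d4 : dot (b - A *ᵥ xG j') (A *ᵥ zG j') = 0 := horth j' _ (hzGmem j')
      have d5 : dot (b - A *ᵥ xG (j'+1)) (A *ᵥ (zG j' - zG (j'+1))) = 0 :=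
        horth (j'+1) _ (Submodule.sub_mem _ (krylov_mono A r0 (Nat.le_succ j') (hzGmem j'))
          (hzGmem (j'+1)))
      -- α = 1
      have hr0R : r0 = (b - A *ᵥ xG (j'+1)) + A *ᵥ zG (j'+1) := by
        rw [hres (j'+1)]; abel
      have ea : dot (b - A *ᵥ xG (j'+1)) r0
          = dot (b - A *ᵥ xG (j'+1)) (b - A *ᵥ xG (j'+1)) := by
        rw [hr0R, dot_add_right, d1, add_zero]
      have eα : dot (b - A *ᵥ xG (j'+1)) (α • r0 + A *ᵥ u)
          = α * dot (b - A *ᵥ xG (j'+1)) r0 := by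
        rw [dot_add_right, dot_smul_right, d2, add_zero]
      rw [← hdec, ea] at eα
      have hα : α = 1 :=
        (mul_right_cancel₀ hdotr (by rw [one_mul]; exact eα)).symm
      have ePR : dot (b - A *ᵥ xG j') (b - A *ᵥ xG (j'+1))
          = dot (b - A *ᵥ xG j') (b - A *ᵥ xG j') := by
        have h1 : dot (b - A *ᵥ xG j') (α • r0 + A *ᵥ u)
            = α * dot (b - A *ᵥ xG j') r0 := by
          rw [dot_add_right, dot_smul_right, d3, add_zero]
        rw [← hdec] at h1
        have hr0P : r0 = (b - A *ᵥ xG j') + A *ᵥ zG j' := by rw [hres j']; abel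
        have h2 : dot (b - A *ᵥ xG j') r0 = dot (b - A *ᵥ xG j') (b - A *ᵥ xG j') := by
          rw [hr0P, dot_add_right, d4, add_zero]
        rw [h1, h2, hα, one_mul]
      have hRP : (b - A *ᵥ xG (j'+1)) - (b - A *ᵥ xG j') = A *ᵥ (zG j' - zG (j'+1)) := by
        rw [hres (j'+1), hres j', mulVec_sub]; abel
      have h3 : dot (b - A *ᵥ xG (j'+1)) (b - A *ᵥ xG (j'+1))
          - dot (b - A *ᵥ xG (j'+1)) (b - A *ᵥ xG j') = 0 := by
        rw [← dot_sub_right, hRP, d5]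
      have hlt := hstag2 (j'+1) (Nat.succ_pos _) hjk
      simp only [Nat.add_sub_cancel] at hlt
      rw [l2norm_lt_iff] at hlt
      have hcomm := dot_comm (b - A *ᵥ xG j') (b - A *ᵥ xG (j'+1))
      linarith
  -- residual of an affine combination
  have hsumres : ∀ (m : ℕ) (e : ℕ → ℝ), (∑ i ∈ Finset.range (m+1), e i) = 1 →
      ∑ i ∈ Finset.range (m+1), e i • (β • (b - A *ᵥ xD i))
        = β • (b - A *ᵥ (∑ i ∈ Finset.range (m+1), e i • xD i)) := by
    intro m e he
    rw [← sum_residual A b m xD e he, Finset.smul_sum]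
    exact Finset.sum_congr rfl fun i _ => smul_comm _ _ _
  -- any constrained minimizer of the DIIS functional equals the GMRES iterate
  have hM : ∀ j : ℕ,
      (∀ i ≤ j, xD i - xG 0 ∈ krylov A r0 i) →
      (∀ z ∈ krylov A r0 j, ∃ d : ℕ → ℝ, (∑ i ∈ Finset.range (j+1), d i) = 1 ∧
          (∑ i ∈ Finset.range (j+1), d i • xD i) = xG 0 + z) →
      ∀ (dd : ℕ → ℝ), (∑ i ∈ Finset.range (j+1), dd i) = 1 →
      (∀ e : ℕ → ℝ, (∑ i ∈ Finset.range (j+1), e i) = 1 →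
        l2norm (∑ i ∈ Finset.range (j+1), dd i • (β • (b - A *ᵥ xD i))) ≤
          l2norm (∑ i ∈ Finset.range (j+1), e i • (β • (b - A *ᵥ xD i)))) →
      (∑ i ∈ Finset.range (j+1), dd i • xD i) = xG j := by
    intro j hS1 hS2 dd hdd1 hddmin
    have hyx0 : (∑ i ∈ Finset.range (j+1), dd i • xD i) - xG 0 ∈ krylov A r0 j := by
      rw [affine_comb j xD dd hdd1, hx0, add_sub_cancel_left]
      refine Submodule.sum_mem _ fun i hi => Submodule.smul_mem _ _ ?_
      rw [Finset.mem_range] at hi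
      exact krylov_mono A r0 (by omega) (hS1 i (by omega))
    have hymin : ∀ z ∈ krylov A r0 j,
        l2norm (b - A *ᵥ (∑ i ∈ Finset.range (j+1), dd i • xD i))
          ≤ l2norm (b - A *ᵥ (xG 0 + z)) := by
      intro z hz
      obtain ⟨d', hd'1, hd'2⟩ := hS2 z hz
      have h := hddmin d' hd'1
      rw [hsumres j dd hdd1, hsumres j d' hd'1, hd'2, l2norm_smul_le_iff hβ] at h
      exact h
    have hxGmem : xG j - xG 0 ∈ krylov A r0 j := by
      rw [hzGeq j, add_sub_cancel_left]
      exact hzGmem j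
    exact minimizers_eq A hA b (xG 0) (krylov A r0 j) hyx0 hxGmem hymin (hGmin j)
  -- the DIIS update lands on g (xG j)
  have hgstep : ∀ j : ℕ, (∑ i ∈ Finset.range (j+1), c j i • xD i) = xG j →
      xD (j+1) = xG j + β • (b - A *ᵥ xG j) := by
    intro j hj
    have h := (hD j).2.2
    simp only at h
    rw [h]
    have hsplit : ∀ i ∈ Finset.range (j+1), c j i • (xD i + β • (b - A *ᵥ xD i))
        = c j i • xD i + c j i • (β • (b - A *ᵥ xD i)) := fun i _ => smul_add _ _ _
    rw [Finset.sum_congr rfl hsplit, Finset.sum_add_distrib, hsumres j (c j) (hD j).1, hj]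
  -- Krylov step decomposition using the residual
  have hsup : ∀ j, j < k → krylov A r0 (j+1)
      ≤ krylov A r0 j ⊔ Submodule.span ℝ {r0 - A *ᵥ zG j} := by
    intro j hjk
    refine le_trans (krylov_succ_le A r0 j) (sup_le le_sup_left ?_)
    rw [Submodule.span_le, Set.singleton_subset_iff]
    cases j with
    | zero =>
      have hz0 : zG 0 = 0 := by
        have := hzGmem 0
        rwa [krylov_zero, Submodule.mem_bot] at this
      show (A ^ 0) *ᵥ r0 ∈ _
      rw [pow_zero, one_mulVec, hz0, mulVec_zero, sub_zero]
      exact Submodule.mem_sup_right (Submodule.mem_span_singleton_self _)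
    | succ j'' =>
      have hrGout : (r0 - A *ᵥ zG (j''+1)) ∉ krylov A r0 (j''+1) := by
        rw [← hres (j''+1)]
        exact hKL (j''+1) hjk
      have h1 : A *ᵥ zG (j''+1) ∈ krylov A r0 (j''+1)
          ⊔ Submodule.span ℝ {(A^(j''+1)) *ᵥ r0} :=
        krylov_succ_le A r0 (j''+1) (mulVec_mem_krylov_succ A r0 (hzGmem (j''+1)))
      obtain ⟨w, hw, w2, hw2, hsum⟩ := Submodule.mem_sup.1 h1
      obtain ⟨γ, rfl⟩ := Submodule.mem_span_singleton.1 hw2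
      by_cases hγ : γ = 0
      · exfalso
        apply hrGout
        have hAz : A *ᵥ zG (j''+1) = w := by rw [← hsum, hγ, zero_smul, add_zero]
        have : r0 - A *ᵥ zG (j''+1) = r0 - w := by rw [hAz]
        rw [this]
        exact Submodule.sub_mem _ (self_mem_krylov A r0 (Nat.succ_le_succ (Nat.zero_le _))) hw
      · have hAz : A *ᵥ zG (j''+1) = w + γ • ((A^(j''+1)) *ᵥ r0) := hsum.symm
        have hrw : r0 - (r0 - A *ᵥ zG (j''+1)) - w = γ • ((A^(j''+1)) *ᵥ r0) := by
          rw [hAz]; abel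
        have hpow : (A^(j''+1)) *ᵥ r0 = γ⁻¹ • (r0 - (r0 - A *ᵥ zG (j''+1)) - w) := by
          rw [hrw, smul_smul, inv_mul_cancel₀ hγ, one_smul]
        show (A ^ (j''+1)) *ᵥ r0 ∈ _
        rw [hpow]
        refine Submodule.smul_mem _ _ ?_
        have h2 : r0 - (r0 - A *ᵥ zG (j''+1)) - w
            = (r0 - w) + (-1 : ℝ) • (r0 - A *ᵥ zG (j''+1)) := by
          rw [neg_one_smul]; abel
        rw [h2]
        exact Submodule.add_mem _
          (Submodule.mem_sup_left (Submodule.sub_mem _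
            (self_mem_krylov A r0 (Nat.succ_le_succ (Nat.zero_le _))) hw))
          (Submodule.mem_sup_right (Submodule.smul_mem _ _
            (Submodule.mem_span_singleton_self _)))
  -- main induction: span structure of the DIIS iterates
  have hΦ : ∀ j, j ≤ k →
      (∀ i ≤ j, xD i - xG 0 ∈ krylov A r0 i) ∧
      (∀ z ∈ krylov A r0 j, ∃ d : ℕ → ℝ, (∑ i ∈ Finset.range (j+1), d i) = 1 ∧
          (∑ i ∈ Finset.range (j+1), d i • xD i) = xG 0 + z) := by
    intro j
    induction j with
    | zero =>
      intro _
      constructor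
      · intro i hi
        rw [Nat.le_zero] at hi
        subst hi
        rw [hx0, sub_self]
        exact Submodule.zero_mem _
      · intro z hz
        rw [krylov_zero, Submodule.mem_bot] at hz
        subst hz
        refine ⟨fun _ => 1, by simp, ?_⟩
        rw [Finset.sum_range_one, one_smul, hx0, add_zero]
    | succ j ih =>
      intro hjk
      obtain ⟨S1, S2⟩ := ih (by omega)
      have hcmin := (hD j).2.1
      simp only at hcmin
      have hM1 : (∑ i ∈ Finset.range (j+1), c j i • xD i) = xG j :=
        hM j S1 S2 (c j) (hD j).1 hcmin
      have hM2 : xD (j+1) = xG j + β • (b - A *ᵥ xG j) := hgstep j hM1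
      have hvj1 : xD (j+1) - xG 0 ∈ krylov A r0 (j+1) := by
        rw [hM2, hres j, hzGeq j]
        have heq : xG 0 + zG j + β • (r0 - A *ᵥ zG j) - xG 0
            = zG j + β • (r0 - A *ᵥ zG j) := by abel
        rw [heq]
        exact Submodule.add_mem _ (krylov_mono A r0 (Nat.le_succ j) (hzGmem j))
          (Submodule.smul_mem _ _ (Submodule.sub_mem _
            (self_mem_krylov A r0 (Nat.succ_le_succ (Nat.zero_le _)))
            (mulVec_mem_krylov_succ A r0 (hzGmem j))))
      have hrg : r0 - A *ᵥ zG j = β⁻¹ • (xD (j+1) - xG 0 - zG j) := by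
        rw [hM2, hres j, hzGeq j]
        have heq : xG 0 + zG j + β • (r0 - A *ᵥ zG j) - xG 0 - zG j
            = β • (r0 - A *ᵥ zG j) := by abel
        rw [heq, smul_smul, inv_mul_cancel₀ hβ, one_smul]
      constructor
      · intro i hi
        rcases Nat.lt_succ_iff_lt_or_eq.1 (Nat.lt_succ_of_le hi) with h | h
        · exact S1 i (by omega)
        · subst h; exact hvj1
      · intro z hz
        have hz' := hsup j (by omega) hz
        obtain ⟨w, hw, w2, hw2, hsum⟩ := Submodule.mem_sup.1 hz'
        obtain ⟨t, rfl⟩ := Submodule.mem_span_singleton.1 hw2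
        obtain ⟨d, hd1, hd2⟩ := S2 (w - (t * β⁻¹) • zG j)
          (Submodule.sub_mem _ hw (Submodule.smul_mem _ _ (hzGmem j)))
        refine ⟨fun i => (if i = j+1 then t * β⁻¹ else d i) - (if i = 0 then t * β⁻¹ else 0),
          ?_, ?_⟩
        · rw [Finset.sum_sub_distrib, Finset.sum_range_succ, if_pos rfl,
            Finset.sum_ite_eq' (Finset.range (j+2)) 0 (fun _ => t * β⁻¹)]
          have he1 : ∑ i ∈ Finset.range (j+1), (if i = j+1 then t * β⁻¹ else d i)
              = ∑ i ∈ Finset.range (j+1), d i := by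
            refine Finset.sum_congr rfl fun i hi => ?_
            rw [Finset.mem_range] at hi
            rw [if_neg (by omega)]
          rw [he1, hd1]
          simp
        · have hpt : ∀ i ∈ Finset.range (j+2),
              ((if i = j+1 then t * β⁻¹ else d i) - (if i = 0 then t * β⁻¹ else 0)) • xD i
              = (if i = j+1 then t * β⁻¹ else d i) • xD i
                - (if i = 0 then (t * β⁻¹) • xD i else 0) := by
            intro i _
            rw [sub_smul]
            congr 1
            by_cases h : i = 0 <;> simp [h]
          rw [Finset.sum_congr rfl hpt, Finset.sum_sub_distrib, Finset.sum_range_succ,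
            if_pos rfl, Finset.sum_ite_eq' (Finset.range (j+2)) 0]
          have he1 : ∑ i ∈ Finset.range (j+1), (if i = j+1 then t * β⁻¹ else d i) • xD i
              = ∑ i ∈ Finset.range (j+1), d i • xD i := by
            refine Finset.sum_congr rfl fun i hi => ?_
            rw [Finset.mem_range] at hi
            rw [if_neg (by omega)]
          rw [he1, hd2]
          have h0mem : (0 : ℕ) ∈ Finset.range (j+2) := by simp
          rw [if_pos h0mem, hx0, ← hsum, hrg]
          rw [smul_smul, smul_sub, smul_sub]
          module
  obtain ⟨S1k, S2k⟩ := hΦ k le_rfl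
  have hcmink := (hD k).2.1
  simp only at hcmink
  have hMk : (∑ i ∈ Finset.range (k+1), c k i • xD i) = xG k :=
    hM k S1k S2k (c k) (hD k).1 hcmink
  have hM2k : xD (k+1) = xG k + β • (b - A *ᵥ xG k) := hgstep k hMk
  -- g-step for every j ≤ k
  have hstep : ∀ j, j < k → xD (j+1) = xG j + β • (b - A *ᵥ xG j) := by
    intro j hj
    obtain ⟨S1, S2⟩ := hΦ j (le_of_lt hj)
    have hcmin := (hD j).2.1
    simp only at hcmin
    exact hgstep j (hM j S1 S2 (c j) (hD j).1 hcmin)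
  -- the new DIIS direction escapes the Krylov space
  have hnotin : ∀ j, j < k → xD (j+1) - xG 0 ∉ krylov A r0 j := by
    intro j hj hmem
    apply hKL j hj
    have heq : b - A *ᵥ xG j = β⁻¹ • ((xD (j+1) - xG 0) - zG j) := by
      rw [hstep j hj, hres j, hzGeq j]
      have h2 : xG 0 + zG j + β • (r0 - A *ᵥ zG j) - xG 0 - zG j
          = β • (r0 - A *ᵥ zG j) := by abel
      rw [h2, smul_smul, inv_mul_cancel₀ hβ, one_smul, ← hres j, hzGeq j]
    rw [heq]
    exact Submodule.smul_mem _ _ (Submodule.sub_mem _ hmem (hzGmem j))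
  -- linear independence of the DIIS directions
  have hind : ∀ j, j ≤ k → ∀ e : ℕ → ℝ,
      (∑ i ∈ Finset.range (j+1), e i • (xD i - xG 0)) = 0 →
      ∀ i, 1 ≤ i → i ≤ j → e i = 0 := by
    intro j
    induction j with
    | zero => intro _ e _ i h1 h2; omega
    | succ j ih =>
      intro hjk e hsum i h1 h2
      have hej : e (j+1) = 0 := by
        by_contra hne
        apply hnotin j (by omega)
        rw [Finset.sum_range_succ] at hsum
        have hsum' : e (j+1) • (xD (j+1) - xG 0)
            = - ∑ i ∈ Finset.range (j+1), e i • (xD i - xG 0) :=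
          eq_neg_of_add_eq_zero_right hsum
        have heq : xD (j+1) - xG 0 = (e (j+1))⁻¹
            • (- ∑ i ∈ Finset.range (j+1), e i • (xD i - xG 0)) := by
          rw [← hsum', smul_smul, inv_mul_cancel₀ hne, one_smul]
        rw [heq]
        refine Submodule.smul_mem _ _ (Submodule.neg_mem _
          (Submodule.sum_mem _ fun i' hi' => Submodule.smul_mem _ _ ?_))
        rw [Finset.mem_range] at hi'
        exact krylov_mono A r0 (by omega) (S1k i' (by omega))
      rcases Nat.lt_succ_iff_lt_or_eq.1 (Nat.lt_succ_of_le h2) with h | h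
      · rw [Finset.sum_range_succ, hej, zero_smul, add_zero] at hsum
        exact ih (by omega) e hsum i h1 (by omega)
      · subst h; exact hej
  refine ⟨?_, hMk.symm, ?_⟩
  · -- uniqueness of the coefficients
    intro d hd1 hdmin i hik
    have hMd : (∑ i ∈ Finset.range (k+1), d i • xD i) = xG k :=
      hM k S1k S2k d hd1 hdmin
    have hzero : ∑ i ∈ Finset.range (k+1), (d i - c k i) • (xD i - xG 0) = 0 := by
      have hpt : ∀ i' ∈ Finset.range (k+1), (d i' - c k i') • (xD i' - xG 0)
          = (d i' • xD i' - c k i' • xD i') - (d i' • xG 0 - c k i' • xG 0) := by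
        intro i' _
        rw [sub_smul, smul_sub, smul_sub]
        abel
      rw [Finset.sum_congr rfl hpt, Finset.sum_sub_distrib, Finset.sum_sub_distrib,
        Finset.sum_sub_distrib, ← Finset.sum_smul, ← Finset.sum_smul, hd1, (hD k).1,
        hMd, hMk]
      simp
    by_cases hi1 : 1 ≤ i
    · exact sub_eq_zero.1 (hind k le_rfl (fun i' => d i' - c k i') hzero i hi1 hik)
    · have hi0 : i = 0 := by omega
      subst hi0
      have h1 : ∑ i' ∈ Finset.range (k+1), (d i' - c k i') = 0 := by
        rw [Finset.sum_sub_distrib, hd1, (hD k).1]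
        ring
      rw [Finset.sum_range_succ'] at h1
      have h2 : ∑ i' ∈ Finset.range k, (d (i'+1) - c k (i'+1)) = 0 := by
        refine Finset.sum_eq_zero fun i' hi' => ?_
        rw [Finset.mem_range] at hi'
        exact hind k le_rfl (fun i'' => d i'' - c k i'') hzero (i'+1) (by omega) (by omega)
      rw [h2, zero_add] at h1
      exact sub_eq_zero.1 h1
  · show xD (k+1) = xG k + β • (b - A *ᵥ xG k)
    exact hM2k

end DIISaux

/-- Equivalence of the full-history DIIS and GMRES for the linear problem
`h(x) = b − Ax`, `g(x) = x + β(b − Ax)`, `f = g − id`: under non-stagnation of the GMRES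
residual norms before step `k`, the DIIS run exists, its step-`k` coefficients are unique,
`x_GMRES⁽ᵏ⁾ = Σᵢ cᵢ⁽ᵏ⁾ x_DIIS⁽ⁱ⁾` and `x_DIIS⁽ᵏ⁺¹⁾ = g(x_GMRES⁽ᵏ⁾)`. -/
theorem stmt1 (n : ℕ) (hn : 0 < n) (A : Matrix (Fin n) (Fin n) ℝ)
    (hA : IsUnit A.det) (b : Fin n → ℝ) (β : ℝ) (hβ : β ≠ 0)
    (xG : ℕ → (Fin n → ℝ)) (hG : IsGMRES A b xG)
    (k : ℕ) (hk : 1 ≤ k)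
    (hstag1 : b - A *ᵥ xG (k - 1) ≠ 0)
    (hstag2 : ∀ j, 0 < j → j < k →
      l2norm (b - A *ᵥ xG j) < l2norm (b - A *ᵥ xG (j - 1))) :
    (∃ (xD : ℕ → (Fin n → ℝ)) (c : ℕ → ℕ → ℝ),
      xD 0 = xG 0 ∧
      IsDIIS (fun v => v + β • (b - A *ᵥ v)) (fun v => β • (b - A *ᵥ v)) xD c) ∧
    ∀ (xD : ℕ → (Fin n → ℝ)) (c : ℕ → ℕ → ℝ),
      xD 0 = xG 0 →
      IsDIIS (fun v => v + β • (b - A *ᵥ v)) (fun v => β • (b - A *ᵥ v)) xD c →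
      (∀ d : ℕ → ℝ, (∑ i ∈ Finset.range (k + 1), d i) = 1 →
        (∀ e : ℕ → ℝ, (∑ i ∈ Finset.range (k + 1), e i) = 1 →
          l2norm (∑ i ∈ Finset.range (k + 1), d i • (β • (b - A *ᵥ xD i))) ≤
            l2norm (∑ i ∈ Finset.range (k + 1), e i • (β • (b - A *ᵥ xD i)))) →
        ∀ i ≤ k, d i = c k i) ∧
      xG k = ∑ i ∈ Finset.range (k + 1), c k i • xD i ∧
      xD (k + 1) = (fun v => v + β • (b - A *ᵥ v)) (xG k) := by
  constructor
  · exact ⟨DIISaux.diisSeq (fun v => v + β • (b - A *ᵥ v)) (fun v => β • (b - A *ᵥ v)) (xG 0),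
      DIISaux.diisC (fun v => v + β • (b - A *ᵥ v)) (fun v => β • (b - A *ᵥ v)) (xG 0),
      DIISaux.diisSeq_zero _ _ _, DIISaux.diis_isDIIS _ _ _⟩
  · intro xD c hx0 hD
    exact DIISaux.key_main A hA b β hβ xG hG k hk hstag1 hstag2 xD c hx0 hD
end

section
/- Let n, m be positive integers and Y, S ∈ M_{n,m}(ℝ) with S of full column rank m. Then the matrix G = −Iₙ + (Y + S)(SᵀS)⁻¹Sᵀ satisfies the inverse multiple secant condition GS = Y, and G minimizes the Frobenius norm ‖G′ + Iₙ‖_F among all matrices G′ ∈ Mₙ(ℝ) satisfying G′S = Y, i.e. ‖G + Iₙ‖_F ≤ ‖G′ + Iₙ‖_F for every G′ with G′S = Y. -/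
open Matrix

/-- The Frobenius norm of a real square matrix. -/
noncomputable def frobNorm {n : ℕ} (M : Matrix (Fin n) (Fin n) ℝ) : ℝ :=
  Real.sqrt (∑ i, ∑ j, (M i j) ^ 2)

lemma sum_mul_eq_trace {n : ℕ} (M N : Matrix (Fin n) (Fin n) ℝ) :
    ∑ i, ∑ j, M i j * N i j = Matrix.trace (Mᵀ * N) := by
  simp only [Matrix.trace, Matrix.diag, Matrix.mul_apply, Matrix.transpose_apply]
  rw [Finset.sum_comm]

lemma posdef_StS {n m : ℕ} (S : Matrix (Fin n) (Fin m) ℝ)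
    (hS : LinearIndependent ℝ (fun j : Fin m => fun i : Fin n => S i j)) :
    (Sᵀ * S).PosDef := by
  refine Matrix.posDef_iff_dotProduct_mulVec.mpr ⟨by simpa using Matrix.isHermitian_conjTranspose_mul_self S, fun x hx => ?_⟩
  have h1 : star x ⬝ᵥ (Sᵀ * S) *ᵥ x = (S *ᵥ x) ⬝ᵥ (S *ᵥ x) := by
    rw [← Matrix.mulVec_mulVec, Matrix.dotProduct_mulVec, Matrix.vecMul_transpose]
    simp [dotProduct_comm]
  rw [h1]
  have hSx : S *ᵥ x ≠ 0 := by
    intro h0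
    apply hx
    have := Fintype.linearIndependent_iff.mp hS x ?_
    · funext j; exact this j
    · funext i
      have := congrFun h0 i
      simpa [Matrix.mulVec, dotProduct, Finset.sum_apply, mul_comm] using this
  have := dotProduct_self_eq_zero (v := S *ᵥ x)
  have hnn : 0 ≤ (S *ᵥ x) ⬝ᵥ (S *ᵥ x) := Finset.sum_nonneg fun i _ => mul_self_nonneg _
  rcases lt_or_eq_of_le hnn with h | h
  · exact h
  · exact absurd (this.mp h.symm) hSx

/-- The type-II multisecant Broyden update
`G = -Iₙ + (Y + S)(SᵀS)⁻¹Sᵀ` satisfies the inverse multiple secant condition `GS = Y` and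
minimizes the Frobenius norm `‖G' + Iₙ‖_F` among all matrices `G'` with `G'S = Y`. -/
theorem stmt2 (n m : ℕ) (hn : 0 < n) (hm : 0 < m)
    (Y S : Matrix (Fin n) (Fin m) ℝ)
    (hS : LinearIndependent ℝ (fun j : Fin m => fun i : Fin n => S i j)) :
    (-1 + (Y + S) * (Sᵀ * S)⁻¹ * Sᵀ) * S = Y ∧
    ∀ G' : Matrix (Fin n) (Fin n) ℝ, G' * S = Y →
      frobNorm ((-1 + (Y + S) * (Sᵀ * S)⁻¹ * Sᵀ) + 1) ≤ frobNorm (G' + 1) := by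
  have hpd := posdef_StS S hS
  have hu : IsUnit (Sᵀ * S).det := isUnit_iff_ne_zero.mpr hpd.det_pos.ne'
  have hinv : (Sᵀ * S)⁻¹ * (Sᵀ * S) = 1 := Matrix.nonsing_inv_mul _ hu
  have hinv' : (Sᵀ * S) * (Sᵀ * S)⁻¹ = 1 := Matrix.mul_nonsing_inv _ hu
  have hsec : (-1 + (Y + S) * (Sᵀ * S)⁻¹ * Sᵀ) * S = Y := by
    have : (Y + S) * (Sᵀ * S)⁻¹ * Sᵀ * S = Y + S := by
      rw [Matrix.mul_assoc ((Y+S) * (Sᵀ * S)⁻¹), Matrix.mul_assoc (Y+S), hinv, Matrix.mul_one]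
    rw [Matrix.add_mul, this]
    simp
  refine ⟨hsec, fun G' hG' => ?_⟩
  set P : Matrix (Fin n) (Fin n) ℝ := S * (Sᵀ * S)⁻¹ * Sᵀ with hP
  have hPsym : Pᵀ = P := by
    rw [hP, Matrix.transpose_mul, Matrix.transpose_mul, Matrix.transpose_transpose,
      (Matrix.transpose_nonsing_inv _), Matrix.transpose_mul, Matrix.transpose_transpose,
      Matrix.mul_assoc]
  have hPP : P * P = P := by
    rw [hP]
    have : S * ((Sᵀ * S)⁻¹ * (Sᵀ * (S * ((Sᵀ * S)⁻¹ * Sᵀ)))) = S * ((Sᵀ * S)⁻¹ * Sᵀ) := by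
      rw [← Matrix.mul_assoc Sᵀ S, ← Matrix.mul_assoc (Sᵀ*S), hinv', Matrix.one_mul]
    simpa only [Matrix.mul_assoc] using this
  set A : Matrix (Fin n) (Fin n) ℝ := G' + 1 with hA
  have hAS : A * S = Y + S := by rw [hA, Matrix.add_mul, hG', Matrix.one_mul]
  have hAP : A * P = (-1 + (Y + S) * (Sᵀ * S)⁻¹ * Sᵀ) + 1 := by
    rw [hP, ← Matrix.mul_assoc, ← Matrix.mul_assoc, hAS]
    abel
  -- cross term is zero
  set B : Matrix (Fin n) (Fin n) ℝ := A - A * P with hB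
  have hcross : Matrix.trace ((A * P)ᵀ * B) = 0 := by
    rw [hB, Matrix.transpose_mul, hPsym, Matrix.mul_sub]
    have h1 : P * Aᵀ * (A * P) = P * Aᵀ * A * P := by rw [Matrix.mul_assoc (P * Aᵀ)]
    rw [Matrix.trace_sub, h1, Matrix.trace_mul_cycle (P * Aᵀ) A P]
    have h2 : P * (P * Aᵀ) = P * Aᵀ := by rw [← Matrix.mul_assoc, hPP]
    rw [h2]
    ring
  have hsq : ∀ M : Matrix (Fin n) (Fin n) ℝ, ∑ i, ∑ j, (M i j)^2 = Matrix.trace (Mᵀ * M) := by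
    intro M
    rw [← sum_mul_eq_trace]
    simp [sq]
  have hBnn : 0 ≤ Matrix.trace (Bᵀ * B) := by
    rw [← hsq]
    exact Finset.sum_nonneg fun i _ => Finset.sum_nonneg fun j _ => sq_nonneg _
  have hdecomp : ∑ i, ∑ j, (A i j)^2
      = ∑ i, ∑ j, ((A * P) i j)^2 + Matrix.trace (Bᵀ * B) := by
    have hAeq : A = A * P + B := by rw [hB]; abel
    have : ∑ i, ∑ j, (A i j)^2
        = ∑ i, ∑ j, (((A*P) i j)^2 + 2 * ((A*P) i j * B i j) + (B i j)^2) := by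
      conv_lhs => rw [hAeq]
      congr 1; ext i; congr 1; ext j
      simp [Matrix.add_apply]; ring
    rw [this]
    simp only [Finset.sum_add_distrib, ← Finset.mul_sum]
    rw [sum_mul_eq_trace, hcross, hsq B]
    ring
  have hle : ∑ i, ∑ j, ((A*P) i j)^2 ≤ ∑ i, ∑ j, (A i j)^2 := by
    rw [hdecomp]; linarith
  simp only [frobNorm]
  rw [← hAP]
  exact Real.sqrt_le_sqrt hle
end

section
/- Let n, m be positive integers and Y, S ∈ M_{n,m}(ℝ) with Y of full column rank m. Then the matrix B = −Iₙ + (Y + S)(YᵀY)⁻¹Yᵀ satisfies the multiple secant condition BY = S, and B minimizes the Frobenius norm ‖B′ + Iₙ‖_F among all matrices B′ ∈ Mₙ(ℝ) satisfying B′Y = S, i.e. ‖B + Iₙ‖_F ≤ ‖B′ + Iₙ‖_F for every B′ with B′Y = S. -/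
open Matrix

lemma sqsum_eq_trace {n : ℕ} (M : Matrix (Fin n) (Fin n) ℝ) :
    ∑ i, ∑ j, (M i j) ^ 2 = (Mᵀ * M).trace := by
  rw [Finset.sum_comm]
  simp [Matrix.trace, Matrix.diag, Matrix.mul_apply, sq]

lemma trace_proj {n : ℕ} (A R : Matrix (Fin n) (Fin n) ℝ) (hRT : Rᵀ = R)
    (hR2 : R * R = R) : ((A * R)ᵀ * (A * R)).trace = ((Aᵀ * A) * R).trace := by
  have h : (A * R)ᵀ * (A * R) = R * ((Aᵀ * A) * R) := by
    simp [Matrix.transpose_mul, hRT, mul_assoc]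
  rw [h, Matrix.trace_mul_comm, mul_assoc, hR2]

lemma frob_mul_proj_le {n : ℕ} (A P : Matrix (Fin n) (Fin n) ℝ)
    (hPT : Pᵀ = P) (hP2 : P * P = P) : frobNorm (A * P) ≤ frobNorm A := by
  have hQT : (1 - P)ᵀ = 1 - P := by
    rw [Matrix.transpose_sub, Matrix.transpose_one, hPT]
  have hQ2 : (1 - P) * (1 - P) = 1 - P := by
    have h : (1 - P) * (1 - P) = 1 - P - (P - P * P) := by noncomm_ring
    rw [h, hP2, sub_self, sub_zero]
  have key : ∑ i, ∑ j, ((A * P) i j) ^ 2 + ∑ i, ∑ j, ((A * (1 - P)) i j) ^ 2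
      = ∑ i, ∑ j, (A i j) ^ 2 := by
    rw [sqsum_eq_trace, sqsum_eq_trace, sqsum_eq_trace,
      trace_proj A P hPT hP2, trace_proj A (1 - P) hQT hQ2,
      ← Matrix.trace_add, ← mul_add, add_sub_cancel, mul_one]
  have hnn : 0 ≤ ∑ i, ∑ j, ((A * (1 - P)) i j) ^ 2 :=
    Finset.sum_nonneg fun i _ => Finset.sum_nonneg fun j _ => sq_nonneg _
  unfold frobNorm
  apply Real.sqrt_le_sqrt
  linarith

/-- The type-I multisecant Broyden update
`B = -Iₙ + (Y + S)(YᵀY)⁻¹Yᵀ` satisfies the multiple secant condition `BY = S` and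
minimizes the Frobenius norm `‖B' + Iₙ‖_F` among all matrices `B'` with `B'Y = S`. -/
theorem stmt3 (n m : ℕ) (hn : 0 < n) (hm : 0 < m)
    (Y S : Matrix (Fin n) (Fin m) ℝ)
    (hY : LinearIndependent ℝ (fun j : Fin m => fun i : Fin n => Y i j)) :
    (-1 + (Y + S) * (Yᵀ * Y)⁻¹ * Yᵀ) * Y = S ∧
    ∀ B' : Matrix (Fin n) (Fin n) ℝ, B' * Y = S →
      frobNorm ((-1 + (Y + S) * (Yᵀ * Y)⁻¹ * Yᵀ) + 1) ≤ frobNorm (B' + 1) := by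
  have hinj : Function.Injective Y.mulVec := Matrix.mulVec_injective_iff.mpr hY
  have hpd : (Yᵀ * Y).PosDef := by
    refine Matrix.PosDef.of_dotProduct_mulVec_pos (by have := Matrix.isHermitian_conjTranspose_mul_self Y; rwa [Matrix.conjTranspose_eq_transpose_of_trivial] at this) fun x hx => ?_
    have h0 : Y *ᵥ x ≠ 0 := fun h => hx (hinj (by simpa using h))
    have heq : star x ⬝ᵥ ((Yᵀ * Y) *ᵥ x) = (Y *ᵥ x) ⬝ᵥ (Y *ᵥ x) := by
      rw [← Matrix.mulVec_mulVec, Matrix.dotProduct_mulVec, Matrix.vecMul_transpose]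
      simp
    rw [heq]
    obtain ⟨i, hi⟩ := Function.ne_iff.mp h0
    refine Finset.sum_pos' (fun j _ => mul_self_nonneg _)
      ⟨i, Finset.mem_univ i, mul_self_pos.mpr hi⟩
  have hdet : IsUnit (Yᵀ * Y).det := hpd.det_pos.ne'.isUnit
  have h1 : (Y + S) * (Yᵀ * Y)⁻¹ * Yᵀ * Y = Y + S := by
    rw [Matrix.mul_assoc ((Y + S) * (Yᵀ * Y)⁻¹), Matrix.nonsing_inv_mul_cancel_right _ _ hdet]
  have hsec : (-1 + (Y + S) * (Yᵀ * Y)⁻¹ * Yᵀ) * Y = S := by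
    rw [Matrix.add_mul, Matrix.neg_mul, Matrix.one_mul, h1, neg_add_cancel_left]
  refine ⟨hsec, fun B' hB' => ?_⟩
  have hPY : Y * (Yᵀ * Y)⁻¹ * Yᵀ * Y = Y := by
    rw [Matrix.mul_assoc (Y * (Yᵀ * Y)⁻¹), Matrix.nonsing_inv_mul_cancel_right _ _ hdet]
  have hPT : (Y * (Yᵀ * Y)⁻¹ * Yᵀ)ᵀ = Y * (Yᵀ * Y)⁻¹ * Yᵀ := by
    simp [Matrix.transpose_mul, Matrix.transpose_nonsing_inv, Matrix.mul_assoc]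
  have hP2 : (Y * (Yᵀ * Y)⁻¹ * Yᵀ) * (Y * (Yᵀ * Y)⁻¹ * Yᵀ) = Y * (Yᵀ * Y)⁻¹ * Yᵀ := by
    rw [← Matrix.mul_assoc, ← Matrix.mul_assoc, hPY]
  have e1 : (-1 + (Y + S) * (Yᵀ * Y)⁻¹ * Yᵀ) + 1 = (Y + S) * (Yᵀ * Y)⁻¹ * Yᵀ := by abel
  have e2 : (Y + S) * (Yᵀ * Y)⁻¹ * Yᵀ = (B' + 1) * (Y * (Yᵀ * Y)⁻¹ * Yᵀ) := by
    have hY' : Y + S = (B' + 1) * Y := by rw [Matrix.add_mul, Matrix.one_mul, hB', add_comm]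
    rw [hY']
    simp [Matrix.mul_assoc]
  rw [e1, e2]
  exact frob_mul_proj_le (B' + 1) _ hPT hP2
end

section
/- Let n, m be positive integers and Y, S ∈ M_{n,m}(ℝ) with Y of full column rank and YᵀS invertible. Then the matrix B = −Iₙ + (Y + S)(YᵀY)⁻¹Yᵀ is invertible and its inverse is given by B⁻¹ = −Iₙ + (Y + S)(YᵀS)⁻¹Yᵀ. -/
open Matrix

theorem aux_isUnit_tmul (n m : ℕ) (Y : Matrix (Fin n) (Fin m) ℝ)
    (hY : LinearIndependent ℝ (fun j : Fin m => fun i : Fin n => Y i j)) :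
    IsUnit (Yᵀ * Y) := by
  rw [← Matrix.mulVec_injective_iff_isUnit]
  have hinj : Function.Injective Y.mulVec := by
    rw [Matrix.mulVec_injective_iff]
    exact hY
  intro a b hab
  apply hinj
  have h : Yᵀ *ᵥ (Y *ᵥ a) = Yᵀ *ᵥ (Y *ᵥ b) := by
    simpa [Matrix.mulVec_mulVec] using hab
  have hd : (Y *ᵥ a - Y *ᵥ b) ⬝ᵥ (Y *ᵥ a - Y *ᵥ b) = 0 := by
    have : Yᵀ *ᵥ (Y *ᵥ a - Y *ᵥ b) = 0 := by
      rw [Matrix.mulVec_sub, h, sub_self]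
    calc (Y *ᵥ a - Y *ᵥ b) ⬝ᵥ (Y *ᵥ a - Y *ᵥ b)
        = (Y *ᵥ a - Y *ᵥ b) ⬝ᵥ (Y *ᵥ (a - b)) := by rw [Matrix.mulVec_sub]
      _ = (Yᵀ *ᵥ (Y *ᵥ a - Y *ᵥ b)) ⬝ᵥ (a - b) := by
          rw [Matrix.dotProduct_mulVec]; rw [Matrix.mulVec_transpose]
      _ = 0 := by rw [this]; simp
  have := dotProduct_self_eq_zero.mp hd
  exact sub_eq_zero.mp this

/-- If `Y` has full column rank and `YᵀS` is invertible, then the type-I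
multisecant Broyden update `B = -Iₙ + (Y + S)(YᵀY)⁻¹Yᵀ` is invertible with inverse
`B⁻¹ = -Iₙ + (Y + S)(YᵀS)⁻¹Yᵀ` (Sherman–Morrison–Woodbury). -/
theorem stmt4 (n m : ℕ) (hn : 0 < n) (hm : 0 < m)
    (Y S : Matrix (Fin n) (Fin m) ℝ)
    (hY : LinearIndependent ℝ (fun j : Fin m => fun i : Fin n => Y i j))
    (hYS : IsUnit (Yᵀ * S)) :
    (-1 + (Y + S) * (Yᵀ * Y)⁻¹ * Yᵀ) * (-1 + (Y + S) * (Yᵀ * S)⁻¹ * Yᵀ) = 1 ∧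
    (-1 + (Y + S) * (Yᵀ * S)⁻¹ * Yᵀ) * (-1 + (Y + S) * (Yᵀ * Y)⁻¹ * Yᵀ) = 1 := by
  have hYY : IsUnit (Yᵀ * Y) := aux_isUnit_tmul n m Y hY
  set G := (Yᵀ * Y)⁻¹
  set H := (Yᵀ * S)⁻¹
  have hG : G * (Yᵀ * Y) = 1 := Matrix.nonsing_inv_mul _ ((Matrix.isUnit_iff_isUnit_det _).mp hYY)
  have hH : H * (Yᵀ * S) = 1 := Matrix.nonsing_inv_mul _ ((Matrix.isUnit_iff_isUnit_det _).mp hYS)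
  have hG' : (Yᵀ * Y) * G = 1 := Matrix.mul_nonsing_inv _ ((Matrix.isUnit_iff_isUnit_det _).mp hYY)
  have hH' : (Yᵀ * S) * H = 1 := Matrix.mul_nonsing_inv _ ((Matrix.isUnit_iff_isUnit_det _).mp hYS)
  have key1 : G * (Yᵀ * (Y + S)) * H = H + G := by
    rw [Matrix.mul_add, Matrix.mul_add, Matrix.add_mul, hG, Matrix.mul_assoc G, one_mul]
    congr 1
    calc G * (Yᵀ * S * H) = G * 1 := by rw [hH']
      _ = G := by rw [mul_one]
  have key2 : H * (Yᵀ * (Y + S)) * G = H + G := by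
    rw [Matrix.mul_add, Matrix.mul_add, Matrix.add_mul, hH, Matrix.mul_assoc H]
    rw [show Yᵀ * Y * G = 1 from hG', mul_one, one_mul, add_comm]
  set A := (Y + S) * G * Yᵀ with hA
  set B := (Y + S) * H * Yᵀ with hB
  have hAB : A * B = A + B := by
    calc A * B = (Y + S) * (G * (Yᵀ * (Y + S)) * H) * Yᵀ := by
          simp only [hA, hB, Matrix.mul_assoc]
      _ = (Y + S) * (H + G) * Yᵀ := by rw [key1]
      _ = A + B := by
          simp only [hA, hB, Matrix.add_mul, Matrix.mul_add]
          abel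
  have hBA : B * A = A + B := by
    calc B * A = (Y + S) * (H * (Yᵀ * (Y + S)) * G) * Yᵀ := by
          simp only [hA, hB, Matrix.mul_assoc]
      _ = (Y + S) * (H + G) * Yᵀ := by rw [key2]
      _ = A + B := by
          simp only [hA, hB, Matrix.add_mul, Matrix.mul_add]
          abel
  constructor
  · have : (-1 + A) * (-1 + B) = 1 - B - A + A * B := by noncomm_ring
    rw [this, hAB]; abel
  · have : (-1 + B) * (-1 + A) = 1 - A - B + B * A := by noncomm_ring
    rw [this, hBA]; abel
end

section
/- Let p, m be positive integers, t > 0, and let r⁽⁰⁾, …, r⁽ᵐ⁾ be nonzero vectors of ℝᵖ. For 0 ≤ ℓ ≤ m let 𝒜_ℓ = Aff{r⁽⁰⁾, …, r⁽ℓ⁾} = {Σ_{i=0}^{ℓ} c_i r⁽ⁱ⁾ : Σ_{i=0}^{ℓ} c_i = 1}, and for 1 ≤ ℓ ≤ m let d_ℓ = dist₂(r⁽ℓ⁾, 𝒜_{ℓ−1}). Assume that d_i ≥ t · max_{j ∈ {i, …, m}} ‖r⁽ʲ⁾‖₂ for every i ∈ {1, …, m}. Then: (1) the vectors r⁽⁰⁾,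 …, r⁽ᵐ⁾ are affinely independent, so that m ≤ p; (2) there is a unique c̃ ∈ ℝ^{m+1} with Σ_{i=0}^{m} c̃_i = 1 and ‖Σ_{i=0}^{m} c̃_i r⁽ⁱ⁾‖₂ = dist₂(0, 𝒜_m); (3) there exists a positive constant C_m depending only on m such that ‖c̃‖_∞ ≤ C_m (1 + t^{−m}). -/
/-- The affine span `Aff{r⁽⁰⁾, …, r⁽ℓ⁾} = {Σ_{i=0}^{ℓ} cᵢ r⁽ⁱ⁾ : Σ cᵢ = 1}`. -/
noncomputable def affSpan {P : ℕ} (r : ℕ → EuclideanSpace ℝ (Fin P)) (ℓ : ℕ) :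
    Set (EuclideanSpace ℝ (Fin P)) :=
  {y | ∃ c : ℕ → ℝ, (∑ i ∈ Finset.range (ℓ + 1), c i) = 1 ∧
    y = ∑ i ∈ Finset.range (ℓ + 1), c i • r i}


section Stmt5Aux
variable {P : ℕ}

lemma sum_mem_affSpan (r : ℕ → EuclideanSpace ℝ (Fin P)) {ℓ : ℕ} {c : ℕ → ℝ}
    (hc : ∑ i ∈ Finset.range (ℓ+1), c i = 1) :
    (∑ i ∈ Finset.range (ℓ+1), c i • r i) ∈ affSpan r ℓ := ⟨c, hc, rfl⟩

lemma mem_affSpan (r : ℕ → EuclideanSpace ℝ (Fin P)) {k ℓ : ℕ} (hk : k ≤ ℓ) :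
    r k ∈ affSpan r ℓ := by
  refine ⟨fun i => if i = k then 1 else 0, ?_, ?_⟩
  · simp [Finset.sum_ite_eq', Nat.lt_succ_of_le hk]
  · simp [ite_smul, Finset.sum_ite_eq', Nat.lt_succ_of_le hk]

lemma affSpan_nonempty (r : ℕ → EuclideanSpace ℝ (Fin P)) (ℓ : ℕ) :
    (affSpan r ℓ).Nonempty := ⟨r 0, mem_affSpan r (Nat.zero_le ℓ)⟩

lemma affSpan_mono (r : ℕ → EuclideanSpace ℝ (Fin P)) {ℓ ℓ' : ℕ} (h : ℓ ≤ ℓ') :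
    affSpan r ℓ ⊆ affSpan r ℓ' := by
  rintro y ⟨c, hc, rfl⟩
  have hsub : Finset.range (ℓ+1) ⊆ Finset.range (ℓ'+1) := Finset.range_subset_range.mpr (by omega)
  refine ⟨fun i => if i < ℓ+1 then c i else 0, ?_, ?_⟩
  · rw [← Finset.sum_subset hsub (fun x _ hx => by
      simp only [Finset.mem_range] at hx; rw [if_neg hx])]
    rw [Finset.sum_congr rfl fun i hi => if_pos (Finset.mem_range.mp hi)]
    exact hc
  · rw [← Finset.sum_subset hsub (fun x _ hx => by
      simp only [Finset.mem_range] at hx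
      simp only [if_neg hx, zero_smul])]
    exact (Finset.sum_congr rfl fun i hi => by
      simp only [if_pos (Finset.mem_range.mp hi)]).symm

lemma affSpan_isClosed (r : ℕ → EuclideanSpace ℝ (Fin P)) (m : ℕ) :
    IsClosed (affSpan r m) := by
  classical
  set V : Submodule ℝ (EuclideanSpace ℝ (Fin P)) :=
    Submodule.span ℝ (Set.range fun j : Fin m => r (j+1) - r 0) with hV
  have heq : affSpan r m = (fun z => z - r 0) ⁻¹' (V : Set (EuclideanSpace ℝ (Fin P))) := by
    ext z
    simp only [Set.mem_preimage, SetLike.mem_coe, hV, Submodule.mem_span_range_iff_exists_fun]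
    constructor
    · rintro ⟨c, hc, rfl⟩
      refine ⟨fun j => c (j+1), ?_⟩
      have e1 : ∑ i ∈ Finset.range (m+1), c i • (r i - r 0)
          = (∑ i ∈ Finset.range (m+1), c i • r i) - r 0 := by
        rw [Finset.sum_congr rfl (fun i _ => smul_sub (c i) (r i) (r 0)),
          Finset.sum_sub_distrib, ← Finset.sum_smul, hc, one_smul]
      have e2 : ∑ i ∈ Finset.range (m+1), c i • (r i - r 0)
          = ∑ j : Fin m, c (j+1) • (r (j+1) - r 0) := by
        rw [Finset.sum_range_succ', sub_self, smul_zero, add_zero, Finset.sum_range]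
      rw [← e2, e1]
    · rintro ⟨a, ha⟩
      set A : ℕ → ℝ := fun i => if h : i < m then a ⟨i, h⟩ else 0 with hA
      have hAa : ∑ i ∈ Finset.range m, A i • (r (i+1) - r 0) = z - r 0 := by
        rw [Finset.sum_range, ← ha]
        exact Finset.sum_congr rfl fun j _ => by simp [hA, j.isLt]
      refine ⟨fun i => if i = 0 then 1 - ∑ i ∈ Finset.range m, A i else A (i-1), ?_, ?_⟩
      · rw [Finset.sum_range_succ',
          Finset.sum_congr rfl (fun i (_ : i ∈ Finset.range m) => by
            simp : ∀ i ∈ Finset.range m,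
              (if i+1 = 0 then 1 - ∑ i ∈ Finset.range m, A i else A (i+1-1)) = A i)]
        simp
      · rw [Finset.sum_range_succ']
        have h2 : ∀ i ∈ Finset.range m,
            (if i+1 = 0 then 1 - ∑ i ∈ Finset.range m, A i else A (i+1-1)) • r (i+1)
              = A i • r (i+1) := fun i _ => by simp
        have expand : ∑ i ∈ Finset.range m, A i • r (i+1)
            = (z - r 0) + (∑ i ∈ Finset.range m, A i) • r 0 := by
          rw [← hAa, Finset.sum_smul, ← Finset.sum_add_distrib]
          exact Finset.sum_congr rfl fun i _ => by rw [smul_sub]; abel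
        rw [Finset.sum_congr rfl h2, expand]
        beta_reduce
        rw [if_pos rfl, sub_smul, one_smul]
        abel
  rw [heq]
  exact (V.closed_of_finiteDimensional).preimage (continuous_id.sub continuous_const)

lemma le_infDist' {α : Type*} [PseudoMetricSpace α] {s : Set α} (hs : s.Nonempty) {x : α} {b : ℝ}
    (h : ∀ y ∈ s, b ≤ dist x y) : b ≤ Metric.infDist x s := by
  by_contra hlt
  rw [not_le, Metric.infDist_lt_iff hs] at hlt
  obtain ⟨y, hy, hd⟩ := hlt
  exact absurd (h y hy) (not_le.mpr hd)

lemma abs_mul_infDist_le (r : ℕ → EuclideanSpace ℝ (Fin P)) {ℓ : ℕ} (hℓ : 1 ≤ ℓ) (b : ℕ → ℝ)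
    (hb : ∑ i ∈ Finset.range (ℓ+1), b i = 1) :
    |b ℓ| * Metric.infDist (r ℓ) (affSpan r (ℓ-1)) ≤
      Metric.infDist (∑ i ∈ Finset.range (ℓ+1), b i • r i) (affSpan r (ℓ-1)) := by
  rcases eq_or_ne (b ℓ) 0 with h0 | h0
  · simpa [h0] using Metric.infDist_nonneg
  have hrr : ℓ - 1 + 1 = ℓ := Nat.succ_pred_eq_of_pos hℓ
  refine le_infDist' (affSpan_nonempty r (ℓ-1)) ?_
  rintro w ⟨e, he, rfl⟩
  rw [hrr] at he ⊢
  set v : EuclideanSpace ℝ (Fin P) := ∑ i ∈ Finset.range ℓ, ((e i - b i)/b ℓ) • r i with hv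
  have hvmem : v ∈ affSpan r (ℓ-1) := by
    refine ⟨fun i => (e i - b i)/b ℓ, ?_, ?_⟩
    · rw [hrr, ← Finset.sum_div, Finset.sum_sub_distrib, he]
      rw [Finset.sum_range_succ] at hb
      have : ∑ i ∈ Finset.range ℓ, b i = 1 - b ℓ := by linarith
      rw [this]
      field_simp
      ring
    · rw [hrr]
  have hkey : (∑ i ∈ Finset.range (ℓ+1), b i • r i) - (∑ i ∈ Finset.range ℓ, e i • r i)
      = b ℓ • (r ℓ - v) := by
    have hbv : b ℓ • v = ∑ i ∈ Finset.range ℓ, (e i - b i) • r i := by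
      rw [hv, Finset.smul_sum]
      exact Finset.sum_congr rfl fun i _ => by
        rw [smul_smul, mul_div_cancel₀ _ h0]
    rw [smul_sub, hbv, Finset.sum_range_succ,
      Finset.sum_congr rfl fun i (_ : i ∈ Finset.range ℓ) => sub_smul (e i) (b i) (r i),
      Finset.sum_sub_distrib]
    abel
  have hdist : dist (∑ i ∈ Finset.range (ℓ+1), b i • r i) (∑ i ∈ Finset.range ℓ, e i • r i)
      = |b ℓ| * ‖r ℓ - v‖ := by
    rw [dist_eq_norm, hkey, norm_smul, Real.norm_eq_abs]
  rw [hdist]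
  have h1 : Metric.infDist (r ℓ) (affSpan r (ℓ-1)) ≤ ‖r ℓ - v‖ := by
    rw [← dist_eq_norm]
    exact Metric.infDist_le_dist_of_mem hvmem
  exact mul_le_mul_of_nonneg_left h1 (abs_nonneg _)

lemma mem_affSpan_pred (r : ℕ → EuclideanSpace ℝ (Fin P)) {j : ℕ} (hj : 1 ≤ j) (c : ℕ → ℝ)
    (hvec : ∑ i ∈ Finset.range (j+1), c i • r i = 0)
    (hsum : ∑ i ∈ Finset.range (j+1), c i = 0) (hcj : c j ≠ 0) :
    r j ∈ affSpan r (j-1) := by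
  have hrr : j - 1 + 1 = j := Nat.succ_pred_eq_of_pos hj
  rw [Finset.sum_range_succ] at hvec hsum
  refine ⟨fun i => -(c i) / c j, ?_, ?_⟩
  · rw [hrr, ← Finset.sum_div]
    have : ∑ i ∈ Finset.range j, -(c i) = c j := by
      rw [Finset.sum_neg_distrib]
      linarith
    rw [this, div_self hcj]
  · rw [hrr]
    have h1 : ∑ i ∈ Finset.range j, (-(c i) / c j) • r i
        = (-(c j)⁻¹) • ∑ i ∈ Finset.range j, c i • r i := by
      rw [Finset.smul_sum]
      exact Finset.sum_congr rfl fun i _ => by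
        rw [smul_smul]
        congr 1
        field_simp
    have h2 : ∑ i ∈ Finset.range j, c i • r i = -(c j • r j) :=
      eq_neg_of_add_eq_zero_left hvec
    rw [h1, h2, smul_neg, neg_smul, neg_neg, smul_smul, inv_mul_cancel₀ hcj, one_smul]

lemma pow_sub_one_le {q : ℝ} (hq : 1 ≤ q) : ∀ k : ℕ, q^k - 1 ≤ k * (q-1) * q^k := by
  intro k
  induction k with
  | zero => simp
  | succ k ih =>
    have h0 : (0:ℝ) ≤ q := by linarith
    have h1 : q * (q^k - 1) ≤ q * (k * (q-1) * q^k) := mul_le_mul_of_nonneg_left ih h0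
    have h2 : (1:ℝ) ≤ q^(k+1) := one_le_pow₀ hq
    rw [pow_succ] at *
    push_cast
    nlinarith [h1, h2]

lemma indep_aux (r : ℕ → EuclideanSpace ℝ (Fin P)) {m : ℕ} (hm : 0 < m)
    (hns : ∀ k, 1 ≤ k → k ≤ m → r k ∉ affSpan r (k-1)) :
    ∀ c : ℕ → ℝ, (∑ i ∈ Finset.range (m+1), c i • r i) = 0 →
      (∑ i ∈ Finset.range (m+1), c i) = 0 → ∀ i ≤ m, c i = 0 := by
  intro c hvec hsum
  have main : ∀ n, ∀ j, j ≤ m → m - n ≤ j → c j = 0 := by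
    intro n
    induction n with
    | zero =>
      intro j hj1 hj2
      have hj : j = m := by omega
      subst hj
      by_contra hc
      exact hns j hm le_rfl (mem_affSpan_pred r hm c hvec hsum hc)
    | succ n ih =>
      intro j hj1 hj2
      by_cases hcase : m - n ≤ j
      · exact ih j hj1 hcase
      · have hz : ∀ i, j < i → i ≤ m → c i = 0 := fun i h1 h2 => ih i h2 (by omega)
        have hsub : Finset.range (j+1) ⊆ Finset.range (m+1) := Finset.range_subset_range.mpr (by omega)
        have hvec' : ∑ i ∈ Finset.range (j+1), c i • r i = 0 := by
          rw [Finset.sum_subset hsub fun x hx hx' => ?_]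
          · exact hvec
          · simp only [Finset.mem_range] at hx hx'
            rw [hz x (by omega) (by omega), zero_smul]
        have hsum' : ∑ i ∈ Finset.range (j+1), c i = 0 := by
          rw [Finset.sum_subset hsub fun x hx hx' => ?_]
          · exact hsum
          · simp only [Finset.mem_range] at hx hx'
            exact hz x (by omega) (by omega)
        rcases Nat.eq_zero_or_pos j with rfl | hjpos
        · simpa using hsum'
        · by_contra hc
          exact hns j hjpos (by omega) (mem_affSpan_pred r hjpos c hvec' hsum' hc)
  exact fun i hi => main m i hi (by omega)

lemma dim_bound (r : ℕ → EuclideanSpace ℝ (Fin P)) {m : ℕ}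
    (h1 : ∀ c : ℕ → ℝ, (∑ i ∈ Finset.range (m+1), c i • r i) = 0 →
      (∑ i ∈ Finset.range (m+1), c i) = 0 → ∀ i ≤ m, c i = 0) :
    m ≤ P := by
  classical
  have hli : LinearIndependent ℝ (fun j : Fin m => r (j+1) - r 0) := by
    rw [Fintype.linearIndependent_iff]
    intro a ha
    set A : ℕ → ℝ := fun i => if h : i < m then a ⟨i, h⟩ else 0 with hA
    set c : ℕ → ℝ := fun i => if i = 0 then -(∑ i ∈ Finset.range m, A i) else A (i-1) with hc
    have ha' : ∑ i ∈ Finset.range m, A i • (r (i+1) - r 0) = 0 := by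
      rw [Finset.sum_range]
      rw [← ha]
      exact Finset.sum_congr rfl fun j _ => by simp [hA, j.isLt]
    have hcA : ∀ i ∈ Finset.range m, c (i+1) = A i := fun i _ => by simp [hc]
    have hc0 : c 0 = -(∑ i ∈ Finset.range m, A i) := by simp [hc]
    have h2 : ∑ i ∈ Finset.range (m+1), c i = 0 := by
      rw [Finset.sum_range_succ', Finset.sum_congr rfl hcA]
      rw [hc0]
      ring
    have h3 : ∑ i ∈ Finset.range (m+1), c i • r i = 0 := by
      rw [Finset.sum_range_succ',
        Finset.sum_congr rfl (fun i hi => by rw [hcA i hi] :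
          ∀ i ∈ Finset.range m, c (i+1) • r (i+1) = A i • r (i+1))]
      have expand : ∑ i ∈ Finset.range m, A i • r (i+1)
          = (∑ i ∈ Finset.range m, A i • (r (i+1) - r 0))
            + (∑ i ∈ Finset.range m, A i) • r 0 := by
        rw [Finset.sum_smul, ← Finset.sum_add_distrib]
        exact Finset.sum_congr rfl fun i _ => by rw [smul_sub]; abel
      rw [expand, ha', zero_add]
      rw [hc0, neg_smul, add_neg_cancel]
    intro j
    have := h1 c h3 h2 (j+1) (by omega)
    rw [hcA j (Finset.mem_range.mpr j.isLt)] at this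
    simpa [hA, j.isLt] using this
  simpa [finrank_euclideanSpace_fin] using hli.fintype_card_le_finrank

end Stmt5Aux


set_option maxHeartbeats 1000000

/-- If the distances `d_ℓ = dist₂(r⁽ℓ⁾, Aff{r⁽⁰⁾,…,r⁽ℓ⁻¹⁾})` of the nonzero
vectors `r⁽⁰⁾, …, r⁽ᵐ⁾` of `ℝᵖ` satisfy `d_i ≥ t·max_{j∈{i,…,m}}‖r⁽ʲ⁾‖₂` for `i ∈ {1,…,m}`,
then the vectors are affinely independent (so `m ≤ p`), there is a unique `c̃` with
`Σ c̃ᵢ = 1` and `‖Σ c̃ᵢ r⁽ⁱ⁾‖₂ = dist₂(0, 𝒜_m)`, and `‖c̃‖_∞ ≤ C_m (1 + t^{−m})` for a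
positive constant `C_m` depending only on `m`. -/
theorem stmt5 :
    ∀ m : ℕ, 0 < m → ∃ C : ℝ, 0 < C ∧
    ∀ p : ℕ, 0 < p → ∀ t : ℝ, 0 < t →
    ∀ r : ℕ → EuclideanSpace ℝ (Fin p),
    (∀ i ≤ m, r i ≠ 0) →
    (∀ i, 1 ≤ i → i ≤ m → ∀ j, i ≤ j → j ≤ m →
      t * ‖r j‖ ≤ Metric.infDist (r i) (affSpan r (i - 1))) →
    (∀ c : ℕ → ℝ, (∑ i ∈ Finset.range (m + 1), c i • r i) = 0 →
      (∑ i ∈ Finset.range (m + 1), c i) = 0 → ∀ i ≤ m, c i = 0) ∧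
    m ≤ p ∧
    ∃ ct : ℕ → ℝ,
      ((∑ i ∈ Finset.range (m + 1), ct i) = 1 ∧
        ‖∑ i ∈ Finset.range (m + 1), ct i • r i‖ = Metric.infDist 0 (affSpan r m)) ∧
      (∀ d : ℕ → ℝ,
        ((∑ i ∈ Finset.range (m + 1), d i) = 1 ∧
          ‖∑ i ∈ Finset.range (m + 1), d i • r i‖ = Metric.infDist 0 (affSpan r m)) →
        ∀ i ≤ m, d i = ct i) ∧
      ∀ i ≤ m, |ct i| ≤ C * (1 + (t ^ m)⁻¹) := by
  intro m hm
  refine ⟨8*(m+1)*(5:ℝ)^m + 1, by positivity, ?_⟩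
  intro p hp t ht r hr hdist
  have ht' : t ≠ 0 := ne_of_gt ht
  have hns : ∀ k, 1 ≤ k → k ≤ m → r k ∉ affSpan r (k-1) := by
    intro k h1 h2 hmem
    have h0 := Metric.infDist_zero_of_mem hmem
    have hle := hdist k h1 h2 k le_rfl h2
    rw [h0] at hle
    have hpos : 0 < t * ‖r k‖ := mul_pos ht (norm_pos_iff.mpr (hr k h2))
    linarith
  have part1 := indep_aux r hm hns
  refine ⟨part1, dim_bound r part1, ?_⟩
  obtain ⟨y, hyK, hyd⟩ :=
    (affSpan_isClosed r m).exists_infDist_eq_dist (affSpan_nonempty r m) 0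
  obtain ⟨c, hc1, hc2⟩ := hyK
  have hny : ‖y‖ = Metric.infDist 0 (affSpan r m) := by rw [hyd, dist_zero_left]
  have hnormy : ‖∑ i ∈ Finset.range (m+1), c i • r i‖ = Metric.infDist 0 (affSpan r m) := by
    rw [← hc2, hny]
  refine ⟨c, ⟨hc1, hnormy⟩, ?_, ?_⟩
  · -- uniqueness
    rintro dd ⟨hd1, hd2⟩ i hi
    have hy'K : (∑ i ∈ Finset.range (m+1), dd i • r i) ∈ affSpan r m := sum_mem_affSpan r hd1
    set y' : EuclideanSpace ℝ (Fin p) := ∑ i ∈ Finset.range (m+1), dd i • r i with hy'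
    set δ : ℝ := Metric.infDist 0 (affSpan r m) with hδ
    have hδ0 : 0 ≤ δ := Metric.infDist_nonneg
    have hmidmem : (∑ i ∈ Finset.range (m+1), ((dd i + c i)/2) • r i) ∈ affSpan r m :=
      sum_mem_affSpan r (by rw [← Finset.sum_div, Finset.sum_add_distrib, hd1, hc1]; norm_num)
    have hmid_eq : (∑ i ∈ Finset.range (m+1), ((dd i + c i)/2) • r i)
        = (2⁻¹ : ℝ) • (y' + y) := by
      rw [hy', hc2, ← Finset.sum_add_distrib, Finset.smul_sum]
      refine Finset.sum_congr rfl fun j _ => ?_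
      rw [← add_smul, smul_smul]
      congr 1
      ring
    have hδmid : δ ≤ 2⁻¹ * ‖y' + y‖ := by
      calc δ ≤ dist 0 (∑ i ∈ Finset.range (m+1), ((dd i + c i)/2) • r i) :=
            Metric.infDist_le_dist_of_mem hmidmem
      _ = ‖(2⁻¹ : ℝ) • (y' + y)‖ := by rw [dist_zero_left, hmid_eq]
      _ = 2⁻¹ * ‖y' + y‖ := by rw [norm_smul]; norm_num
    have hpar := parallelogram_law_with_norm ℝ y' y
    have hyy : y' = y := by
      have hsub : ‖y' - y‖ * ‖y' - y‖ ≤ 0 := by nlinarith [hd2, hny, norm_nonneg (y' + y)]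
      have : ‖y' - y‖ = 0 := le_antisymm (by nlinarith [norm_nonneg (y' - y)]) (norm_nonneg _)
      rw [norm_eq_zero, sub_eq_zero] at this
      exact this
    have hz : ∑ j ∈ Finset.range (m+1), (dd j - c j) • r j = 0 := by
      rw [Finset.sum_congr rfl fun j (_ : j ∈ Finset.range (m+1)) => sub_smul (dd j) (c j) (r j),
        Finset.sum_sub_distrib, ← hy', ← hc2, hyy, sub_self]
    have hzs : ∑ j ∈ Finset.range (m+1), (dd j - c j) = 0 := by
      rw [Finset.sum_sub_distrib, hd1, hc1, sub_self]
    have := part1 (fun j => dd j - c j) hz hzs i hi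
    simp only [sub_eq_zero] at this
    exact this
  · -- the bound
    intro i him
    have habs2 : ∀ a b : ℝ, |a - b| ≤ |a| + |b| := fun a b => by
      rw [sub_eq_add_neg]
      exact (abs_add_le a (-b)).trans (by rw [abs_neg])
    have hdpos : ∀ ℓ, 1 ≤ ℓ → ℓ ≤ m → 0 < Metric.infDist (r ℓ) (affSpan r (ℓ-1)) :=
      fun ℓ h1 h2 =>
        lt_of_lt_of_le (mul_pos ht (norm_pos_iff.mpr (hr ℓ h2))) (hdist ℓ h1 h2 ℓ le_rfl h2)
    have hnorm_le : ∀ ℓ, 1 ≤ ℓ → ℓ ≤ m → ∀ j, ℓ ≤ j → j ≤ m →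
        ‖r j‖ ≤ Metric.infDist (r ℓ) (affSpan r (ℓ-1)) / t := by
      intro ℓ h1 h2 j hj1 hj2
      rw [le_div_iff₀ ht, mul_comm]
      exact hdist ℓ h1 h2 j hj1 hj2
    have hyle : ∀ ℓ, ℓ ≤ m → ‖y‖ ≤ Metric.infDist 0 (affSpan r ℓ) := by
      intro ℓ hℓ
      rw [hny]
      exact Metric.infDist_le_infDist_of_subset (affSpan_mono r hℓ) (affSpan_nonempty r ℓ)
    have hsplit : ∀ ℓ, ℓ ≤ m+1 →
        (∑ j ∈ Finset.range ℓ, c j) + ∑ j ∈ Finset.Ico ℓ (m+1), c j = 1 := by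
      intro ℓ hℓ
      rw [Finset.range_eq_Ico, Finset.sum_Ico_consecutive c (Nat.zero_le ℓ) hℓ,
        ← Finset.range_eq_Ico]
      exact hc1
    have hUnn : ∀ a b : ℕ, 0 ≤ ∑ j ∈ Finset.Ico a b, |c j| :=
      fun a b => Finset.sum_nonneg fun j _ => abs_nonneg _
    have key : ∀ ℓ, 1 ≤ ℓ → ℓ ≤ m →
        |∑ j ∈ Finset.Ico ℓ (m+1), c j| ≤
          2/t * (∑ j ∈ Finset.Ico (ℓ+1) (m+1), |c j|) + 2*(1+1/t) := by
      intro ℓ h1 h2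
      set sℓ : ℝ := ∑ j ∈ Finset.Ico ℓ (m+1), c j with hsℓ
      set b : ℕ → ℝ := fun j => if j = ℓ then sℓ else c j with hb
      have hbℓ : b ℓ = sℓ := by simp [hb]
      have hbrange : ∀ j ∈ Finset.range ℓ, b j = c j := by
        intro j hj
        simp only [Finset.mem_range] at hj
        show (if j = ℓ then sℓ else c j) = c j
        rw [if_neg (by omega : ¬ j = ℓ)]
      have hbsum : ∑ j ∈ Finset.range (ℓ+1), b j = 1 := by
        rw [Finset.sum_range_succ, Finset.sum_congr rfl hbrange, hbℓ]
        exact hsplit ℓ (by omega)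
      have hlow := abs_mul_infDist_le r h1 b hbsum
      rw [hbℓ] at hlow
      set z : EuclideanSpace ℝ (Fin p) := ∑ j ∈ Finset.range (ℓ+1), b j • r j with hz
      have hzy : z - y = ∑ j ∈ Finset.Ico (ℓ+1) (m+1), c j • (r ℓ - r j) := by
        have hzz : z = (∑ j ∈ Finset.range ℓ, c j • r j) + sℓ • r ℓ := by
          rw [hz, Finset.sum_range_succ,
            Finset.sum_congr rfl (fun j hj => by rw [hbrange j hj]), hbℓ]
        have hyy2 : y = (∑ j ∈ Finset.range ℓ, c j • r j)
            + ∑ j ∈ Finset.Ico ℓ (m+1), c j • r j := by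
          rw [hc2, Finset.range_eq_Ico, ← Finset.sum_Ico_consecutive (fun j => c j • r j)
            (Nat.zero_le ℓ) (by omega : ℓ ≤ m+1), ← Finset.range_eq_Ico]
        rw [hzz, hyy2]
        have hsmul : sℓ • r ℓ = ∑ j ∈ Finset.Ico ℓ (m+1), c j • r ℓ := by
          rw [hsℓ, Finset.sum_smul]
        rw [hsmul,
          Finset.sum_eq_sum_Ico_succ_bot (by omega : ℓ < m+1) (fun j => c j • r ℓ),
          Finset.sum_eq_sum_Ico_succ_bot (by omega : ℓ < m+1) (fun j => c j • r j),
          Finset.sum_congr rfl (fun j (_ : j ∈ Finset.Ico (ℓ+1) (m+1)) =>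
            smul_sub (c j) (r ℓ) (r j)),
          Finset.sum_sub_distrib]
        abel
      have hzynorm : ‖z - y‖ ≤ (2 * (Metric.infDist (r ℓ) (affSpan r (ℓ-1)) / t)) *
          ∑ j ∈ Finset.Ico (ℓ+1) (m+1), |c j| := by
        rw [hzy]
        calc ‖∑ j ∈ Finset.Ico (ℓ+1) (m+1), c j • (r ℓ - r j)‖
            ≤ ∑ j ∈ Finset.Ico (ℓ+1) (m+1), ‖c j • (r ℓ - r j)‖ := norm_sum_le _ _
        _ ≤ ∑ j ∈ Finset.Ico (ℓ+1) (m+1),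
              |c j| * (2 * (Metric.infDist (r ℓ) (affSpan r (ℓ-1)) / t)) := by
            refine Finset.sum_le_sum fun j hj => ?_
            simp only [Finset.mem_Ico] at hj
            rw [norm_smul, Real.norm_eq_abs]
            refine mul_le_mul_of_nonneg_left ?_ (abs_nonneg _)
            calc ‖r ℓ - r j‖ ≤ ‖r ℓ‖ + ‖r j‖ := norm_sub_le _ _
            _ ≤ Metric.infDist (r ℓ) (affSpan r (ℓ-1)) / t
                + Metric.infDist (r ℓ) (affSpan r (ℓ-1)) / t :=
              add_le_add (hnorm_le ℓ h1 h2 ℓ le_rfl h2)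
                (hnorm_le ℓ h1 h2 j (by omega) (by omega))
            _ = 2 * (Metric.infDist (r ℓ) (affSpan r (ℓ-1)) / t) := by ring
        _ = _ := by rw [← Finset.sum_mul, mul_comm]
      have hchain : |sℓ| * Metric.infDist (r ℓ) (affSpan r (ℓ-1)) ≤
          (2 * (Metric.infDist (r ℓ) (affSpan r (ℓ-1)) / t)) *
            (∑ j ∈ Finset.Ico (ℓ+1) (m+1), |c j|)
          + 2 * (Metric.infDist (r ℓ) (affSpan r (ℓ-1))
              + Metric.infDist (r ℓ) (affSpan r (ℓ-1))/t) := by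
        have s2 : Metric.infDist z (affSpan r (ℓ-1)) ≤
            Metric.infDist y (affSpan r (ℓ-1)) + dist z y :=
          Metric.infDist_le_infDist_add_dist
        have s3 : Metric.infDist y (affSpan r (ℓ-1)) ≤
            Metric.infDist 0 (affSpan r (ℓ-1)) + ‖y‖ := by
          have h3a := Metric.infDist_le_infDist_add_dist (x := y)
            (y := (0:EuclideanSpace ℝ (Fin p))) (s := affSpan r (ℓ-1))
          rw [dist_eq_norm, sub_zero] at h3a
          exact h3a
        have s4 : ‖y‖ ≤ Metric.infDist 0 (affSpan r (ℓ-1)) := hyle (ℓ-1) (by omega)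
        have s5 : Metric.infDist 0 (affSpan r (ℓ-1)) ≤
            Metric.infDist (r ℓ) (affSpan r (ℓ-1))
              + Metric.infDist (r ℓ) (affSpan r (ℓ-1))/t := by
          have h5a := Metric.infDist_le_infDist_add_dist
            (x := (0:EuclideanSpace ℝ (Fin p))) (y := r ℓ) (s := affSpan r (ℓ-1))
          rw [dist_zero_left] at h5a
          have h5b := hnorm_le ℓ h1 h2 ℓ le_rfl h2
          linarith
        have s6 : dist z y = ‖z - y‖ := dist_eq_norm z y
        linarith [hlow, hzynorm]
      have hdp := hdpos ℓ h1 h2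
      refine le_of_mul_le_mul_right (hchain.trans_eq ?_) hdp
      field_simp
    have hUrec : ∀ ℓ, 1 ≤ ℓ → ℓ ≤ m →
        (∑ j ∈ Finset.Ico ℓ (m+1), |c j|) ≤
          (1+4/t) * (∑ j ∈ Finset.Ico (ℓ+1) (m+1), |c j|) + 4*(1+1/t) := by
      intro ℓ h1 h2
      have hcℓ : c ℓ = (∑ j ∈ Finset.Ico ℓ (m+1), c j)
          - ∑ j ∈ Finset.Ico (ℓ+1) (m+1), c j := by
        rw [Finset.sum_eq_sum_Ico_succ_bot (by omega : ℓ < m+1) c]; ring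
      have hUsplit : (∑ j ∈ Finset.Ico ℓ (m+1), |c j|)
          = |c ℓ| + ∑ j ∈ Finset.Ico (ℓ+1) (m+1), |c j| :=
        Finset.sum_eq_sum_Ico_succ_bot (by omega : ℓ < m+1) fun j => |c j|
      have hk1 := key ℓ h1 h2
      have hsℓ1 : |∑ j ∈ Finset.Ico (ℓ+1) (m+1), c j| ≤
          2/t * (∑ j ∈ Finset.Ico (ℓ+1) (m+1), |c j|) + 2*(1+1/t) := by
        rcases Nat.lt_or_ge ℓ m with hlt | hge
        · have hk2 := key (ℓ+1) (by omega) (by omega)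
          have hmono : (∑ j ∈ Finset.Ico (ℓ+2) (m+1), |c j|)
              ≤ ∑ j ∈ Finset.Ico (ℓ+1) (m+1), |c j| :=
            Finset.sum_le_sum_of_subset_of_nonneg
              (Finset.Ico_subset_Ico (by omega) le_rfl) (fun j _ _ => abs_nonneg _)
          have h2t : 0 ≤ 2/t := by positivity
          nlinarith [hk2, hmono]
        · have hempty : Finset.Ico (ℓ+1) (m+1) = ∅ := Finset.Ico_eq_empty (by omega)
          rw [hempty]
          simp only [Finset.sum_empty, abs_zero, mul_zero, zero_add]
          positivity
      have habs3 : |c ℓ| ≤ |∑ j ∈ Finset.Ico ℓ (m+1), c j|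
          + |∑ j ∈ Finset.Ico (ℓ+1) (m+1), c j| := by
        rw [hcℓ]; exact habs2 _ _
      rw [hUsplit]
      have e1 : (1+4/t) * (∑ j ∈ Finset.Ico (ℓ+1) (m+1), |c j|)
          = (∑ j ∈ Finset.Ico (ℓ+1) (m+1), |c j|)
            + 2*(2/t * ∑ j ∈ Finset.Ico (ℓ+1) (m+1), |c j|) := by
        field_simp; ring
      linarith [hk1, hsℓ1, habs3]
    have main : ∀ n, n ≤ m →
        (∑ j ∈ Finset.Ico (m+1-n) (m+1), |c j|) ≤ (t+1) * ((1+4/t)^n - 1) := by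
      intro n
      induction n with
      | zero =>
        intro _
        simp
      | succ n ihn =>
        intro hn
        have ihh := ihn (by omega)
        have hstep : m+1-(n+1)+1 = m+1-n := by omega
        have hrec := hUrec (m+1-(n+1)) (by omega) (by omega)
        rw [hstep] at hrec
        have hq0 : (0:ℝ) ≤ 1+4/t := by positivity
        calc (∑ j ∈ Finset.Ico (m+1-(n+1)) (m+1), |c j|)
            ≤ (1+4/t) * (∑ j ∈ Finset.Ico (m+1-n) (m+1), |c j|) + 4*(1+1/t) := hrec
        _ ≤ (1+4/t) * ((t+1) * ((1+4/t)^n - 1)) + 4*(1+1/t) := by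
            linarith [mul_le_mul_of_nonneg_left ihh hq0]
        _ = (t+1) * ((1+4/t)^(n+1) - 1) := by
            have hAq : (t+1)*(4/t) = 4*(1+1/t) := by field_simp
            rw [pow_succ]
            linear_combination (-1 : ℝ) * hAq
    have hU1 : (∑ j ∈ Finset.Ico 1 (m+1), |c j|) ≤ (t+1) * ((1+4/t)^m - 1) := by
      have hmm := main m le_rfl
      rwa [show m+1-m = 1 by omega] at hmm
    have hci : |c i| ≤ 1 + ∑ j ∈ Finset.Ico 1 (m+1), |c j| := by
      rcases Nat.eq_zero_or_pos i with rfl | hip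
      · have h01 := hsplit 1 (by omega)
        rw [show (∑ j ∈ Finset.range 1, c j) = c 0 by simp] at h01
        have habs1 : |∑ j ∈ Finset.Ico 1 (m+1), c j| ≤ ∑ j ∈ Finset.Ico 1 (m+1), |c j| :=
          Finset.abs_sum_le_sum_abs _ _
        calc |c 0| = |1 - ∑ j ∈ Finset.Ico 1 (m+1), c j| := by
              rw [show (1:ℝ) - ∑ j ∈ Finset.Ico 1 (m+1), c j = c 0 by linarith]
        _ ≤ |(1:ℝ)| + |∑ j ∈ Finset.Ico 1 (m+1), c j| := habs2 _ _
        _ ≤ 1 + ∑ j ∈ Finset.Ico 1 (m+1), |c j| := by rw [abs_one]; linarith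
      · have hsingle : |c i| ≤ ∑ j ∈ Finset.Ico 1 (m+1), |c j| :=
          Finset.single_le_sum (f := fun j => |c j|) (fun j _ => abs_nonneg _)
            (Finset.mem_Ico.mpr ⟨hip, by omega⟩)
        linarith
    have hfin : 1 + (t+1) * ((1+4/t)^m - 1) ≤ (8*(m+1)*(5:ℝ)^m + 1) * (1 + (t^m)⁻¹) := by
      have htm : (0:ℝ) < t^m := pow_pos ht m
      have htminv : (0:ℝ) ≤ (t^m)⁻¹ := by positivity
      have hq1 : (1:ℝ) ≤ 1+4/t := le_add_of_nonneg_right (by positivity)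
      rcases le_or_gt 1 t with h1t | h1t
      · have hq5 : (1:ℝ)+4/t ≤ 5 := by
          have h4t : 4/t ≤ 4 := by rw [div_le_iff₀ ht]; nlinarith
          linarith
        have hqm5 : ((1:ℝ)+4/t)^m ≤ 5^m := pow_le_pow_left₀ (by linarith) hq5 m
        have hpow := pow_sub_one_le hq1 m
        have h2t : t+1 ≤ 2*t := by linarith
        have hqm1 : (0:ℝ) ≤ (1+4/t)^m - 1 := by
          have hle1 := one_le_pow₀ hq1 (n := m); linarith
        have hmul : (t+1) * ((1+4/t)^m - 1) ≤ (2*t) * ((m:ℝ) * (4/t) * (1+4/t)^m) := by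
          refine mul_le_mul h2t ?_ hqm1 (by linarith)
          calc ((1:ℝ)+4/t)^m - 1 ≤ (m:ℝ) * ((1+4/t)-1) * (1+4/t)^m := hpow
          _ = (m:ℝ) * (4/t) * (1+4/t)^m := by ring_nf
        have heqq : (2*t) * ((m:ℝ) * (4/t) * (1+4/t)^m) = 8*m*(1+4/t)^m := by
          field_simp; ring
        have hle : 8*(m:ℝ)*(1+4/t)^m ≤ 8*m*5^m := by
          have h0m : (0:ℝ) ≤ 8*m := by positivity
          exact mul_le_mul_of_nonneg_left hqm5 h0m
        have hC1 : 1 + 8*(m:ℝ)*5^m ≤ 8*(m+1)*(5:ℝ)^m + 1 := by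
          nlinarith [pow_pos (by norm_num : (0:ℝ) < 5) m]
        nlinarith [mul_nonneg (by positivity : (0:ℝ) ≤ 8*((m:ℝ)+1)*(5:ℝ)^m + 1) htminv]
      · have h1t' : (1:ℝ) ≤ 1/t := by rw [le_div_iff₀ ht]; linarith
        have hq5t : (1:ℝ)+4/t ≤ 5/t := by
          rw [show (5:ℝ)/t = 1/t + 4/t by ring]
          linarith
        have hqm : ((1:ℝ)+4/t)^m ≤ (5/t)^m := pow_le_pow_left₀ (by positivity) hq5t m
        have hdivpow : ((5:ℝ)/t)^m = 5^m * (t^m)⁻¹ := by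
          rw [div_pow, div_eq_mul_inv]
        have h2 : t+1 ≤ 2 := by linarith
        have hqmn : (0:ℝ) ≤ (1+4/t)^m := by positivity
        have h5m1 : (1:ℝ) ≤ (5:ℝ)^m := one_le_pow₀ (by norm_num)
        have hmul : (t+1)*((1+4/t)^m - 1) ≤ 2 * (5^m * (t^m)⁻¹) := by
          have hstep1 : (t+1)*((1+4/t)^m - 1) ≤ 2*((1+4/t)^m) := by
            have hge1 : (1:ℝ) ≤ (1+4/t)^m := one_le_pow₀ hq1
            nlinarith
          rw [← hdivpow]
          nlinarith [hqm]
        have hC2 : (2:ℝ)*(5^m) ≤ 8*((m:ℝ)+1)*(5:ℝ)^m + 1 := by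
          nlinarith [pow_pos (by norm_num : (0:ℝ) < 5) m]
        nlinarith [htminv, h5m1, mul_le_mul_of_nonneg_right hC2 htminv]
    linarith [hci, hU1, hfin]
end

section
/- Let p and k₀ be natural numbers, ξ > 0 and D₀ > 0, and let (a_k)_{k ∈ ℕ} be a sequence of nonnegative real numbers such that a_k ≤ D₀ · a_{k−p−1}^{1+ξ} for all k ≥ p + 1, and D₀^{1/ξ} a_{k₀+i} ≤ 1/2 for every i ∈ {0, …, p}. Then for every k ≥ k₀, writing k − k₀ = (p+1)q + i with i ∈ {0, …, p}, one has a_k ≤ D₀^{−1/ξ} · 2^{−(1+ξ)^q}. In particular, there exist b > 0 and η ∈ (0,1) such that a_k ≤ b · η^{θᵏ} for all k ≥ k₀, with θ = (1+ξ)^{1/(p+1)}, i.e. (a_k) converges to zero superlinearly with r-order at least (1+ξ)^{1/(p+1)}. -/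
/-- If a nonnegative sequence satisfies `a_k ≤ D₀ · a_{k−p−1}^{1+ξ}` for all
`k ≥ p+1` and `D₀^{1/ξ} a_{k₀+i} ≤ 1/2` for `i ∈ {0,…,p}`, then for every `k ≥ k₀`, writing
`k − k₀ = (p+1)q + i` with `i ≤ p`, one has `a_k ≤ D₀^{−1/ξ} · 2^{−(1+ξ)^q}`; in particular
`(a_k)` converges to zero superlinearly with r-order at least `(1+ξ)^{1/(p+1)}`. -/
theorem stmt15 (p k₀ : ℕ) (ξ D₀ : ℝ) (hξ : 0 < ξ) (hD₀ : 0 < D₀)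
    (a : ℕ → ℝ) (ha : ∀ k, 0 ≤ a k)
    (hrec : ∀ k, p + 1 ≤ k → a k ≤ D₀ * a (k - p - 1) ^ (1 + ξ))
    (hinit : ∀ i ≤ p, D₀ ^ (1 / ξ) * a (k₀ + i) ≤ 1 / 2) :
    (∀ k, k₀ ≤ k → ∀ q i : ℕ, i ≤ p → k - k₀ = (p + 1) * q + i →
      a k ≤ D₀ ^ (-(1 / ξ)) * (2 : ℝ) ^ (-((1 + ξ) ^ q))) ∧
    ∃ b : ℝ, 0 < b ∧ ∃ η : ℝ, 0 < η ∧ η < 1 ∧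
      ∀ k, k₀ ≤ k → a k ≤ b * η ^ (((1 + ξ) ^ (1 / ((p : ℝ) + 1))) ^ k) := by
  set C : ℝ := D₀ ^ (-(1 / ξ)) with hC
  have hCpos : 0 < C := Real.rpow_pos_of_pos hD₀ _
  have hξ1 : (0:ℝ) < 1 + ξ := by linarith
  have hD1 : (0:ℝ) < D₀ ^ (1 / ξ) := Real.rpow_pos_of_pos hD₀ _
  have hCinv : C = (D₀ ^ (1 / ξ))⁻¹ := by
    rw [hC, Real.rpow_neg hD₀.le]
  -- main induction
  have main : ∀ q : ℕ, ∀ i ≤ p, a (k₀ + (p + 1) * q + i) ≤ C * (2:ℝ) ^ (-((1 + ξ) ^ q)) := by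
    intro q
    induction q with
    | zero =>
      intro i hi
      have h := hinit i hi
      have h2 : ((2:ℝ)) ^ (-((1 + ξ) ^ 0)) = 1/2 := by
        norm_num [Real.rpow_neg_one]
      rw [h2, hCinv]
      rw [inv_mul_eq_div, le_div_iff₀ hD1, mul_comm]
      exact h
    | succ q ih =>
      intro i hi
      set k := k₀ + (p + 1) * (q + 1) + i with hk
      have he : k = (k₀ + (p + 1) * q + i) + (p + 1) := by rw [hk]; ring
      have hk' : k - p - 1 = k₀ + (p + 1) * q + i := by omega
      have hge : p + 1 ≤ k := by omega
      have h1 := hrec k hge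
      rw [hk'] at h1
      have h2 : a (k₀ + (p + 1) * q + i) ^ (1 + ξ) ≤ (C * (2:ℝ) ^ (-((1 + ξ) ^ q))) ^ (1 + ξ) :=
        Real.rpow_le_rpow (ha _) (ih i hi) hξ1.le
      have h2pos : (0:ℝ) < (2:ℝ) ^ (-((1 + ξ) ^ q)) := Real.rpow_pos_of_pos two_pos _
      have h3 : (C * (2:ℝ) ^ (-((1 + ξ) ^ q))) ^ (1 + ξ)
          = C ^ (1 + ξ) * (2:ℝ) ^ (-((1 + ξ) ^ (q+1))) := by
        rw [Real.mul_rpow hCpos.le h2pos.le, ← Real.rpow_mul (by norm_num : (0:ℝ) ≤ 2)]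
        congr 1
        rw [pow_succ]; ring
      have h4 : D₀ * C ^ (1 + ξ) = C := by
        rw [hC, ← Real.rpow_mul hD₀.le]
        nth_rewrite 1 [← Real.rpow_one D₀]
        rw [← Real.rpow_add hD₀]
        congr 1
        field_simp
        ring
      calc a k ≤ D₀ * a (k₀ + (p + 1) * q + i) ^ (1 + ξ) := h1
        _ ≤ D₀ * (C * (2:ℝ) ^ (-((1 + ξ) ^ q))) ^ (1 + ξ) := by
            exact mul_le_mul_of_nonneg_left h2 hD₀.le
        _ = (D₀ * C ^ (1 + ξ)) * (2:ℝ) ^ (-((1 + ξ) ^ (q+1))) := by rw [h3]; ring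
        _ = C * (2:ℝ) ^ (-((1 + ξ) ^ (q+1))) := by rw [h4]
  have part1 : ∀ k, k₀ ≤ k → ∀ q i : ℕ, i ≤ p → k - k₀ = (p + 1) * q + i →
      a k ≤ C * (2 : ℝ) ^ (-((1 + ξ) ^ q)) := by
    intro k hk q i hi heq
    have : k = k₀ + (p + 1) * q + i := by omega
    rw [this]
    exact main q i hi
  refine ⟨part1, C, hCpos, ?_⟩
  set θ : ℝ := (1 + ξ) ^ (1 / ((p : ℝ) + 1)) with hθ
  have hθ1 : 1 < θ := by
    rw [hθ]
    exact (Real.one_lt_rpow_iff_of_pos hξ1).mpr (Or.inl ⟨by linarith, by positivity⟩)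
  have hθpos : 0 < θ := lt_trans one_pos hθ1
  have hθpow : θ ^ (p + 1) = 1 + ξ := by
    rw [hθ, ← Real.rpow_natCast ((1 + ξ) ^ (1 / ((p : ℝ) + 1))) (p+1),
      ← Real.rpow_mul hξ1.le]
    push_cast
    rw [one_div, inv_mul_cancel₀ (by positivity : ((p:ℝ) + 1) ≠ 0), Real.rpow_one]
  set c : ℝ := (θ ^ (k₀ + p))⁻¹ with hc
  have hcpos : 0 < c := by positivity
  refine ⟨(2:ℝ) ^ (-c), Real.rpow_pos_of_pos two_pos _, ?_, ?_⟩
  · exact Real.rpow_lt_one_of_one_lt_of_neg one_lt_two (by linarith)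
  · intro k hk
    obtain ⟨q, i, hi, heq⟩ : ∃ q i : ℕ, i ≤ p ∧ k - k₀ = (p + 1) * q + i := by
      refine ⟨(k - k₀) / (p + 1), (k - k₀) % (p + 1), ?_, ?_⟩
      · have := Nat.mod_lt (k - k₀) (by omega : 0 < p + 1); omega
      · exact (Nat.div_add_mod (k - k₀) (p + 1)).symm
    have h1 := part1 k hk q i hi heq
    have hkeq : k = k₀ + (p + 1) * q + i := by omega
    -- exponent comparison : c * θ^k ≤ (1+ξ)^q
    have hexp : c * θ ^ k ≤ (1 + ξ) ^ q := by
      have h2 : (1 + ξ) ^ q = θ ^ ((p + 1) * q) := by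
        rw [pow_mul, hθpow]
      rw [h2, hc, inv_mul_le_iff₀ (by positivity), ← pow_add]
      apply pow_le_pow_right₀ hθ1.le
      omega
    have h3 : (2:ℝ) ^ (-((1 + ξ) ^ q)) ≤ ((2:ℝ) ^ (-c)) ^ (θ ^ k) := by
      rw [← Real.rpow_mul (by norm_num : (0:ℝ) ≤ 2)]
      apply Real.rpow_le_rpow_left_iff one_lt_two |>.mpr
      nlinarith [hexp]
    calc a k ≤ C * (2:ℝ) ^ (-((1 + ξ) ^ q)) := h1
      _ ≤ C * ((2:ℝ) ^ (-c)) ^ (θ ^ k) := mul_le_mul_of_nonneg_left h3 hCpos.le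
end

section
/- Let g be a function of class C¹ on an open neighbourhood of a point x* ∈ ℝⁿ with g(x*) = x* and ‖Dg(x*)‖ < 1 (operator norm), and set f = g − id. Then Assumptions 1 and 2 are satisfied: there exist an open neighbourhood V of x*, a constant K ∈ (0,1) and a constant σ > 0 such that ‖f(g(x))‖₂ ≤ K‖f(x)‖₂ for all x ∈ V ∩ g⁻¹(V) and σ‖x − x*‖₂ ≤ ‖f(x)‖₂ for all x ∈ V. -/
/-- If `g` is `C¹` on an open neighbourhood of a fixed point `x*` with
`‖Dg(x*)‖ < 1`, then, with `f = g − id`, Assumptions 1 and 2 hold: there are an open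
neighbourhood `V` of `x*`, `K ∈ (0,1)` and `σ > 0` such that `‖f(g x)‖ ≤ K ‖f x‖` on
`V ∩ g⁻¹(V)` and `σ‖x − x*‖ ≤ ‖f x‖` on `V`. -/
theorem stmt16 (n : ℕ) (hn : 0 < n)
    (g : EuclideanSpace ℝ (Fin n) → EuclideanSpace ℝ (Fin n))
    (xs : EuclideanSpace ℝ (Fin n)) (W : Set (EuclideanSpace ℝ (Fin n)))
    (hW : IsOpen W) (hxsW : xs ∈ W) (hg : ContDiffOn ℝ 1 g W)
    (hfix : g xs = xs) (hDg : ‖fderiv ℝ g xs‖ < 1) :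
    ∃ (V : Set (EuclideanSpace ℝ (Fin n))) (K σ : ℝ),
      IsOpen V ∧ xs ∈ V ∧ 0 < K ∧ K < 1 ∧ 0 < σ ∧
      (∀ x ∈ V, g x ∈ V → ‖g (g x) - g x‖ ≤ K * ‖g x - x‖) ∧
      (∀ x ∈ V, σ * ‖x - xs‖ ≤ ‖g x - x‖) := by
  set L : ℝ := (‖fderiv ℝ g xs‖ + 1) / 2 with hL
  have hL1 : L < 1 := by simp only [hL]; linarith
  have hL0 : 0 < L := by
    have := norm_nonneg (fderiv ℝ g xs)
    simp only [hL]; linarith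
  have hDgL : ‖fderiv ℝ g xs‖ < L := by simp only [hL]; linarith
  -- continuity of the derivative on W
  have hcont : ContinuousOn (fderiv ℝ g) W :=
    hg.continuousOn_fderiv_of_isOpen hW le_rfl
  have hUopen : IsOpen (W ∩ (fun y => ‖fderiv ℝ g y‖) ⁻¹' Set.Iio L) :=
    (hcont.norm).isOpen_inter_preimage hW isOpen_Iio
  have hxsU : xs ∈ W ∩ (fun y => ‖fderiv ℝ g y‖) ⁻¹' Set.Iio L :=
    ⟨hxsW, hDgL⟩
  obtain ⟨r, hr0, hball⟩ := Metric.isOpen_iff.mp hUopen xs hxsU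
  refine ⟨Metric.ball xs r, L, 1 - L, Metric.isOpen_ball, Metric.mem_ball_self hr0,
    hL0, hL1, by linarith, ?_, ?_⟩
  · -- Lipschitz bound on the ball
    intro x hx hgx
    have hdiff : ∀ y ∈ Metric.ball xs r, DifferentiableAt ℝ g y := fun y hy =>
      (hg.differentiableOn one_ne_zero).differentiableAt (hW.mem_nhds (hball hy).1)
    have hbound : ∀ y ∈ Metric.ball xs r, ‖fderiv ℝ g y‖ ≤ L := fun y hy =>
      le_of_lt (hball hy).2
    exact (convex_ball xs r).norm_image_sub_le_of_norm_fderiv_le hdiff hbound hx hgx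
  · intro x hx
    have hdiff : ∀ y ∈ Metric.ball xs r, DifferentiableAt ℝ g y := fun y hy =>
      (hg.differentiableOn one_ne_zero).differentiableAt (hW.mem_nhds (hball hy).1)
    have hbound : ∀ y ∈ Metric.ball xs r, ‖fderiv ℝ g y‖ ≤ L := fun y hy =>
      le_of_lt (hball hy).2
    have hlip : ‖g x - g xs‖ ≤ L * ‖x - xs‖ :=
      (convex_ball xs r).norm_image_sub_le_of_norm_fderiv_le hdiff hbound
        (Metric.mem_ball_self hr0) hx
    have h1 : ‖x - xs‖ - ‖g x - g xs‖ ≤ ‖(x - xs) - (g x - g xs)‖ :=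
      norm_sub_norm_le _ _
    have h2 : (x - xs) - (g x - g xs) = -(g x - x) := by rw [hfix]; abel
    rw [h2, norm_neg] at h1
    nlinarith [norm_nonneg (x - xs)]
end

section
/- Let A be a nonsingular real n×n matrix, b ∈ ℝⁿ, and β a nonzero real number such that ‖Iₙ − βA‖₂ < 1 (spectral norm), and set g(x) = (Iₙ − βA)x + βb, f = g − id, x* = A⁻¹b. Then for any initial point x⁽⁰⁾ ∈ ℝⁿ with f(x⁽⁰⁾) ≠ 0, the full-history DIIS applied to g and f is well defined (at each step before the solution is reached, the constrained least-squares problem for the extrapolation coefficients has a unique solution) and converges to the exact solution in a finite number of steps: there exists k ≤ ν(A, b − Ax⁽⁰⁾) + 1 such that x_DIIS^{(k)} = A⁻¹b, where ν(A, v) denotes the grade of v with respect to A. -/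
open Matrix

section AuxLemmas

/-- Minimality and uniqueness of the orthogonal projection as nearest point. -/
lemma proj_min_aux {E : Type*} [NormedAddCommGroup E] [InnerProductSpace ℝ E]
    (K : Submodule ℝ E) [K.HasOrthogonalProjection] (v w : E) (hw : w ∈ K) :
    ‖v - (K.orthogonalProjection v : E)‖ ≤ ‖v - w‖ ∧
    (‖v - w‖ ≤ ‖v - (K.orthogonalProjection v : E)‖ → w = (K.orthogonalProjection v : E)) := by
  set p : E := (K.orthogonalProjection v : E) with hp
  have hperp : v - p ∈ Kᗮ := K.sub_starProjection_mem_orthogonal v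
  have hpK : p ∈ K := (K.orthogonalProjection v).2
  have hinner : inner ℝ (v - p) (p - w) = (0 : ℝ) := by
    have := (Submodule.mem_orthogonal K (v - p)).mp hperp (p - w) (K.sub_mem hpK hw)
    rwa [real_inner_comm] at this
  have hsq : ‖v - w‖ ^ 2 = ‖v - p‖ ^ 2 + ‖p - w‖ ^ 2 := by
    have hvw : v - w = (v - p) + (p - w) := by abel
    rw [hvw, norm_add_sq_real, hinner]
    ring
  constructor
  · have h1 : ‖v - p‖ ^ 2 ≤ ‖v - w‖ ^ 2 := by
      rw [hsq]; nlinarith [sq_nonneg ‖p - w‖]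
    nlinarith [norm_nonneg (v - w), norm_nonneg (v - p)]
  · intro hle
    have h2 : ‖v - w‖ ^ 2 ≤ ‖v - p‖ ^ 2 := by
      have := norm_nonneg (v - p)
      nlinarith [norm_nonneg (v - w)]
    have : ‖p - w‖ ^ 2 ≤ 0 := by nlinarith
    have : ‖p - w‖ = 0 := by nlinarith [norm_nonneg (p - w), sq_nonneg ‖p - w‖]
    have : p - w = 0 := norm_eq_zero.mp this
    have : w = p := by linear_combination (norm := abel1) -this
    exact this

/-- Splitting off the last element of a `Fin (k+1)`-indexed range. -/
lemma range_fin_succ_aux {α : Type*} (g : ℕ → α) (k : ℕ) :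
    (Set.range fun i : Fin (k+1) => g i) = (Set.range fun i : Fin k => g i) ∪ {g k} := by
  ext v
  constructor
  · rintro ⟨i, rfl⟩
    rcases lt_or_eq_of_le (Nat.lt_succ_iff.mp i.2) with h | h
    · exact Or.inl ⟨⟨i, h⟩, rfl⟩
    · exact Or.inr (by simp [h])
  · rintro (⟨i, rfl⟩ | h)
    · exact ⟨⟨i, Nat.lt_succ_of_lt i.2⟩, rfl⟩
    · exact ⟨⟨k, Nat.lt_succ_self k⟩, by simp_all⟩

lemma sum_mulVec_aux {n : ℕ} {ι : Type*} (s : Finset ι) (f : ι → Matrix (Fin n) (Fin n) ℝ)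
    (v : Fin n → ℝ) : (∑ i ∈ s, f i) *ᵥ v = ∑ i ∈ s, f i *ᵥ v := by
  classical
  induction s using Finset.induction with
  | empty => simp [Matrix.zero_mulVec]
  | insert _ _ h ih =>
    rw [Finset.sum_insert h, Finset.sum_insert h, Matrix.add_mulVec, ih]

lemma mulVec_sum_aux {n : ℕ} {ι : Type*} (s : Finset ι) (A : Matrix (Fin n) (Fin n) ℝ)
    (f : ι → (Fin n → ℝ)) : A *ᵥ (∑ i ∈ s, f i) = ∑ i ∈ s, A *ᵥ f i := by
  classical
  induction s using Finset.induction with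
  | empty => simp [Matrix.mulVec_zero]
  | insert _ _ h ih =>
    rw [Finset.sum_insert h, Finset.sum_insert h, Matrix.mulVec_add, ih]

end AuxLemmas
/-- For the linear problem with `‖Iₙ − βA‖₂ < 1` (expressed as: there is a
constant `Kc < 1` bounding the ℓ²-operator action of `Iₙ − βA`), the full-history DIIS with
`g(x) = (Iₙ − βA)x + βb`, `f = g − id`, starting from any `x⁽⁰⁾` with `f(x⁽⁰⁾) ≠ 0`, is well
defined with unique extrapolation coefficients before the solution is reached, and reaches
the exact solution `A⁻¹b` in at most `ν(A, b − Ax⁽⁰⁾) + 1` steps. -/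
theorem stmt17 (n : ℕ) (hn : 0 < n) (A : Matrix (Fin n) (Fin n) ℝ) (hA : IsUnit A.det)
    (b : Fin n → ℝ) (β : ℝ) (hβ : β ≠ 0)
    (Kc : ℝ) (hKc : Kc < 1)
    (hcontr : ∀ v : Fin n → ℝ, l2norm ((1 - β • A) *ᵥ v) ≤ Kc * l2norm v)
    (x0 : Fin n → ℝ) (hr0 : β • (b - A *ᵥ x0) ≠ 0) :
    ∃ (x : ℕ → (Fin n → ℝ)) (c : ℕ → ℕ → ℝ),
      x 0 = x0 ∧
      IsDIIS (fun v => v + β • (b - A *ᵥ v)) (fun v => β • (b - A *ᵥ v)) x c ∧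
      (∀ k : ℕ, (∀ j ≤ k, β • (b - A *ᵥ x j) ≠ 0) →
        ∀ d : ℕ → ℝ, (∑ i ∈ Finset.range (k + 1), d i) = 1 →
          (∀ e : ℕ → ℝ, (∑ i ∈ Finset.range (k + 1), e i) = 1 →
            l2norm (∑ i ∈ Finset.range (k + 1), d i • (β • (b - A *ᵥ x i))) ≤
              l2norm (∑ i ∈ Finset.range (k + 1), e i • (β • (b - A *ᵥ x i)))) →
          ∀ i ≤ k, d i = c k i) ∧
      ∃ k ≤ krylovGrade A (b - A *ᵥ x0) + 1, x k = A⁻¹ *ᵥ b := by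
  classical
  let φ : (Fin n → ℝ) ≃ₗ[ℝ] EuclideanSpace ℝ (Fin n) :=
    (WithLp.linearEquiv 2 ℝ (Fin n → ℝ)).symm
  have l2φ : ∀ v : Fin n → ℝ, l2norm v = ‖φ v‖ := by
    intro v
    rw [EuclideanSpace.norm_eq]
    unfold l2norm
    congr 1
    refine Finset.sum_congr rfl fun i _ => ?_
    rw [Real.norm_eq_abs, sq_abs]
    rfl
  have hAinv : ∀ v : Fin n → ℝ, A⁻¹ *ᵥ (A *ᵥ v) = v := by
    intro v
    rw [Matrix.mulVec_mulVec, Matrix.nonsing_inv_mul A hA, Matrix.one_mulVec]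
  have hAinj : ∀ v : Fin n → ℝ, A *ᵥ v = 0 → v = 0 := by
    intro v h
    have := hAinv v
    rw [h, Matrix.mulVec_zero] at this
    exact this.symm
  set S : (Fin n → ℝ) →ₗ[ℝ] (Fin n → ℝ) := (β • A).mulVecLin with hSdef
  have hSapp : ∀ v, S v = β • (A *ᵥ v) := by
    intro v
    simp [hSdef, Matrix.mulVecLin_apply, Matrix.smul_mulVec]
  have hSinj : Function.Injective S := by
    intro u v h
    rw [hSapp, hSapp] at h
    have h2 : A *ᵥ u = A *ᵥ v := by
      have := smul_right_injective (Fin n → ℝ) hβ h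
      exact this
    have : A *ᵥ (u - v) = 0 := by rw [Matrix.mulVec_sub, h2, sub_self]
    exact sub_eq_zero.mp (hAinj _ this)
  set r0 : Fin n → ℝ := β • (b - A *ᵥ x0) with hr0def
  have hcontr' : ∀ v : Fin n → ℝ, ‖φ (v - S v)‖ ≤ Kc * ‖φ v‖ := by
    intro v
    have h1 : (1 - β • A) *ᵥ v = v - S v := by
      rw [Matrix.sub_mulVec, Matrix.one_mulVec, hSapp, Matrix.smul_mulVec]
    have := hcontr v
    rwa [h1, l2φ, l2φ] at this
  set kry : ℕ → Submodule ℝ (Fin n → ℝ) :=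
    fun k => Submodule.span ℝ (Set.range fun i : Fin k => (A ^ (i : ℕ)) *ᵥ r0) with hkrydef
  have kry_gen : ∀ k i, i < k → (A ^ i) *ᵥ r0 ∈ kry k :=
    fun k i hi => Submodule.subset_span ⟨⟨i, hi⟩, rfl⟩
  have kry_zero : kry 0 = ⊥ := by
    rw [hkrydef]
    simp
  have kry_mono : ∀ {k l : ℕ}, k ≤ l → kry k ≤ kry l := by
    intro k l hkl
    apply Submodule.span_le.mpr
    rintro v ⟨i, rfl⟩
    exact kry_gen l i (lt_of_lt_of_le i.2 hkl)
  have r0_mem : ∀ k, 0 < k → r0 ∈ kry k := by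
    intro k hk
    have := kry_gen k 0 hk
    rwa [pow_zero, Matrix.one_mulVec] at this
  have kry_succ : ∀ k, kry (k + 1) = kry k ⊔ (ℝ ∙ ((A ^ k) *ᵥ r0)) := by
    intro k
    have hset := range_fin_succ_aux (fun j => (A ^ j) *ᵥ r0) k
    show Submodule.span ℝ (Set.range fun i : Fin (k+1) => (A ^ (i : ℕ)) *ᵥ r0) = _
    rw [hset, Submodule.span_union]
  have Amap : ∀ k, ∀ v ∈ kry k, A *ᵥ v ∈ kry (k + 1) := by
    intro k v hv
    induction hv using Submodule.span_induction with
    | mem w hw =>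
      obtain ⟨i, rfl⟩ := hw
      have : A *ᵥ ((A ^ (i : ℕ)) *ᵥ r0) = (A ^ ((i : ℕ) + 1)) *ᵥ r0 := by
        rw [Matrix.mulVec_mulVec, pow_succ']
      rw [this]
      exact kry_gen (k + 1) _ (by omega)
    | zero => rw [Matrix.mulVec_zero]; exact (kry (k + 1)).zero_mem
    | add u w _ _ hu hw => rw [Matrix.mulVec_add]; exact (kry (k + 1)).add_mem hu hw
    | smul a u _ hu => rw [Matrix.mulVec_smul]; exact (kry (k + 1)).smul_mem a hu
  have Smap : ∀ k, ∀ v ∈ kry k, S v ∈ kry (k + 1) := by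
    intro k v hv
    rw [hSapp]
    exact (kry (k + 1)).smul_mem β (Amap k v hv)
  -- the constrained minimizer over each Krylov space
  have hEx : ∀ k, ∃ u, u ∈ kry k ∧
      (∀ w ∈ kry k, ‖φ (r0 - S u)‖ ≤ ‖φ (r0 - S w)‖) ∧
      (∀ w ∈ kry k, ‖φ (r0 - S w)‖ ≤ ‖φ (r0 - S u)‖ → w = u) := by
    intro k
    set K : Submodule ℝ (EuclideanSpace ℝ (Fin n)) :=
      (kry k).map (φ.toLinearMap ∘ₗ S) with hKdef
    have hpmem : (K.orthogonalProjection (φ r0) : EuclideanSpace ℝ (Fin n)) ∈ K :=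
      (K.orthogonalProjection (φ r0)).2
    obtain ⟨u, huk, hu⟩ := hpmem
    have e3 : φ (S u) = (K.orthogonalProjection (φ r0) : EuclideanSpace ℝ (Fin n)) := hu
    have e1 : φ (r0 - S u) = φ r0 - (K.orthogonalProjection (φ r0) : EuclideanSpace ℝ (Fin n)) := by
      rw [map_sub, e3]
    have e2 : ∀ w : Fin n → ℝ, φ (r0 - S w) = φ r0 - φ (S w) := fun w => map_sub φ _ _
    refine ⟨u, huk, ?_, ?_⟩
    · intro w hw
      have hwK : φ (S w) ∈ K := ⟨w, hw, rfl⟩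
      calc ‖φ (r0 - S u)‖
          = ‖φ r0 - (K.orthogonalProjection (φ r0) : EuclideanSpace ℝ (Fin n))‖ := by rw [e1]
        _ ≤ ‖φ r0 - φ (S w)‖ := (proj_min_aux K (φ r0) (φ (S w)) hwK).1
        _ = ‖φ (r0 - S w)‖ := by rw [e2]
    · intro w hw hle
      have hwK : φ (S w) ∈ K := ⟨w, hw, rfl⟩
      have h2 := (proj_min_aux K (φ r0) (φ (S w)) hwK).2
      have hle' : ‖φ r0 - φ (S w)‖ ≤
          ‖φ r0 - (K.orthogonalProjection (φ r0) : EuclideanSpace ℝ (Fin n))‖ := by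
        rw [← e2, ← e1]; exact hle
      have h4 : φ (S w) = φ (S u) := (h2 hle').trans e3.symm
      exact hSinj (φ.injective h4)
  choose m hm hmin huniq using hEx
  -- the DIIS iterates
  set X : ℕ → (Fin n → ℝ) :=
    fun k => Nat.rec x0 (fun j _ => (x0 + m j) + (r0 - S (m j))) k with hXdef
  have hX0 : X 0 = x0 := rfl
  have hXs : ∀ k, X (k + 1) = (x0 + m k) + (r0 - S (m k)) := fun k => rfl
  have hfX : ∀ y : Fin n → ℝ, β • (b - A *ᵥ y) = r0 - S (y - x0) := by
    intro y
    rw [hSapp, hr0def, Matrix.mulVec_sub]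
    rw [smul_sub, smul_sub, smul_sub]
    abel
  have hu : ∀ k, X (k + 1) - x0 = r0 + (m k - S (m k)) := by
    intro k
    rw [hXs k]
    abel
  have hXkry : ∀ k, X (k + 1) - x0 ∈ kry (k + 1) := by
    intro k
    rw [hu k]
    refine (kry (k + 1)).add_mem (r0_mem (k + 1) (Nat.succ_pos k)) ?_
    exact (kry (k + 1)).sub_mem (kry_mono (Nat.le_succ k) (hm k)) (Smap k _ (hm k))
  have hres_succ : ∀ k, r0 - S (X (k + 1) - x0) = (r0 - S (m k)) - S (r0 - S (m k)) := by
    intro k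
    rw [hu k]
    simp only [map_add, map_sub]
    abel
  -- non-stagnation while the residual is nonzero
  have NS : ∀ k, r0 - S (m k) ≠ 0 → X (k + 1) - x0 ∉ kry k := by
    intro k hw hmem
    set w : Fin n → ℝ := r0 - S (m k) with hwdef
    have h1 : ‖φ w‖ ≤ ‖φ (r0 - S (X (k + 1) - x0))‖ := hmin k _ hmem
    have h2 : ‖φ (r0 - S (X (k + 1) - x0))‖ = ‖φ (w - S w)‖ := by rw [hres_succ k]
    have h3 : ‖φ (w - S w)‖ ≤ Kc * ‖φ w‖ := hcontr' w
    have h4 : 0 < ‖φ w‖ := by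
      rw [norm_pos_iff]
      simp only [ne_eq, map_eq_zero]
      exact (LinearEquiv.map_ne_zero_iff φ).mpr hw
    nlinarith
  -- affine spans of the iterates
  set W : ℕ → Submodule ℝ (Fin n → ℝ) :=
    fun k => Submodule.span ℝ (Set.range fun i : Fin (k + 1) => X i - x0) with hWdef
  have W_genX : ∀ k i, i ≤ k → X i - x0 ∈ W k :=
    fun k i hi => Submodule.subset_span ⟨⟨i, by omega⟩, rfl⟩
  have W_mono : ∀ k, W k ≤ W (k + 1) := by
    intro k
    apply Submodule.span_le.mpr
    rintro v ⟨i, rfl⟩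
    exact W_genX (k + 1) i (by omega)
  have W_le_kry : ∀ k, W k ≤ kry k := by
    intro k
    apply Submodule.span_le.mpr
    rintro v ⟨i, rfl⟩
    show X (i : ℕ) - x0 ∈ kry k
    rcases Nat.eq_zero_or_pos (i : ℕ) with h | h
    · have : X (i : ℕ) - x0 = 0 := by rw [h, hX0, sub_self]
      rw [this]
      exact (kry k).zero_mem
    · obtain ⟨j, hj⟩ := Nat.exists_eq_add_of_lt h
      have hj' : (i : ℕ) = j + 1 := by omega
      have h2 := hXkry j
      rw [← hj'] at h2
      exact kry_mono (by omega : (i : ℕ) ≤ k) h2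
  -- grade of the initial residual
  set ν : ℕ := krylovGrade A (b - A *ᵥ x0) with hνdef
  have hv0 : b - A *ᵥ x0 ≠ 0 := by
    intro h
    apply hr0
    rw [hr0def, h, smul_zero]
  have hsetne : {ℓ : ℕ | ∃ P : Polynomial ℝ, P ≠ 0 ∧ P.natDegree = ℓ ∧
      (Polynomial.aeval A P) *ᵥ (b - A *ᵥ x0) = 0}.Nonempty := by
    refine ⟨(Matrix.charpoly A).natDegree, Matrix.charpoly A,
      (Matrix.charpoly_monic A).ne_zero, rfl, ?_⟩
    rw [Matrix.aeval_self_charpoly, Matrix.zero_mulVec]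
  obtain ⟨P, hPne, hPdeg, hPkill⟩ :
      ∃ P : Polynomial ℝ, P ≠ 0 ∧ P.natDegree = ν ∧
        (Polynomial.aeval A P) *ᵥ (b - A *ᵥ x0) = 0 := Nat.sInf_mem hsetne
  have hgrade_min : ∀ Q : Polynomial ℝ, Q ≠ 0 →
      (Polynomial.aeval A Q) *ᵥ (b - A *ᵥ x0) = 0 → ν ≤ Q.natDegree :=
    fun Q h1 h2 => Nat.sInf_le ⟨Q, h1, rfl, h2⟩
  have halgC : ∀ (cc : ℝ) (w : Fin n → ℝ),
      (Polynomial.aeval A (Polynomial.C cc)) *ᵥ w = cc • w := by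
    intro cc w
    rw [Polynomial.aeval_C, Algebra.algebraMap_eq_smul_one, Matrix.smul_mulVec,
      Matrix.one_mulVec]
  have hν_pos : 0 < ν := by
    by_contra h
    push_neg at h
    interval_cases ν
    · have hPC : P = Polynomial.C (P.coeff 0) := Polynomial.eq_C_of_natDegree_eq_zero hPdeg
      rw [hPC, halgC] at hPkill
      rcases smul_eq_zero.mp hPkill with h1 | h1
      · exact hPne (by rw [hPC, h1, map_zero])
      · exact hv0 h1
  have aeval_mulVec : ∀ (Q : Polynomial ℝ) (w : Fin n → ℝ),
      (Polynomial.aeval A Q) *ᵥ w =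
        ∑ i ∈ Finset.range (Q.natDegree + 1), Q.coeff i • ((A ^ i) *ᵥ w) := by
    intro Q w
    rw [Polynomial.aeval_eq_sum_range, sum_mulVec_aux]
    refine Finset.sum_congr rfl fun i _ => ?_
    rw [Matrix.smul_mulVec]
  have hkillr0 : ∀ Q : Polynomial ℝ,
      (Polynomial.aeval A Q) *ᵥ r0 = 0 ↔ (Polynomial.aeval A Q) *ᵥ (b - A *ᵥ x0) = 0 := by
    intro Q
    rw [hr0def, Matrix.mulVec_smul]
    constructor
    · intro h
      rcases smul_eq_zero.mp h with h1 | h1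
      · exact absurd h1 hβ
      · exact h1
    · intro h
      rw [h, smul_zero]
  have aeval_kry : ∀ Q : Polynomial ℝ,
      (Polynomial.aeval A Q) *ᵥ r0 ∈ kry (Q.natDegree + 1) := by
    intro Q
    rw [aeval_mulVec]
    exact Submodule.sum_mem _ fun i hi =>
      (kry _).smul_mem _ (kry_gen _ i (Finset.mem_range.mp hi))
  have hP0 : P.coeff 0 ≠ 0 := by
    intro h0
    have hdvd : P = Polynomial.X * P.divX := by
      conv_lhs => rw [← Polynomial.X_mul_divX_add P]
      rw [h0, map_zero, add_zero]
    have hQne : P.divX ≠ 0 := by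
      intro h
      rw [h, mul_zero] at hdvd
      exact hPne hdvd
    have hkill' : (Polynomial.aeval A P.divX) *ᵥ (b - A *ᵥ x0) = 0 := by
      apply hAinj
      have h1 : (Polynomial.aeval A P) *ᵥ (b - A *ᵥ x0) =
          A *ᵥ ((Polynomial.aeval A P.divX) *ᵥ (b - A *ᵥ x0)) := by
        conv_lhs => rw [hdvd]
        rw [_root_.map_mul, Polynomial.aeval_X, ← Matrix.mulVec_mulVec]
      rw [← h1, hPkill]
    have h2 := hgrade_min _ hQne hkill'
    have h3 : P.divX.natDegree = ν - 1 := by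
      rw [Polynomial.natDegree_divX_eq_natDegree_tsub_one, hPdeg]
    omega
  -- the exact solution is reachable in the ν-th Krylov space
  have r0_reach : ∃ u ∈ kry ν, S u = r0 := by
    have hsplit : A *ᵥ ((Polynomial.aeval A P.divX) *ᵥ (b - A *ᵥ x0)) +
        P.coeff 0 • (b - A *ᵥ x0) = 0 := by
      have h1 : (Polynomial.aeval A (Polynomial.X * P.divX + Polynomial.C (P.coeff 0)))
          *ᵥ (b - A *ᵥ x0) = 0 := by
        rw [Polynomial.X_mul_divX_add]
        exact hPkill
      rw [map_add, Matrix.add_mulVec, _root_.map_mul, Polynomial.aeval_X,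
        ← Matrix.mulVec_mulVec, halgC] at h1
      exact h1
    set q : Fin n → ℝ := (Polynomial.aeval A P.divX) *ᵥ (b - A *ᵥ x0) with hqdef
    have hv0eq : (b - A *ᵥ x0) = A *ᵥ ((-(P.coeff 0)⁻¹) • q) := by
      rw [Matrix.mulVec_smul]
      have h2 : A *ᵥ q = -(P.coeff 0 • (b - A *ᵥ x0)) := by
        rw [eq_neg_iff_add_eq_zero]
        exact hsplit
      rw [h2, smul_neg, neg_smul, neg_neg, smul_smul, inv_mul_cancel₀ hP0, one_smul]
    refine ⟨(-(P.coeff 0)⁻¹ * β⁻¹) • ((Polynomial.aeval A P.divX) *ᵥ r0), ?_, ?_⟩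
    · apply (kry ν).smul_mem
      have h3 := aeval_kry P.divX
      have hdeg : P.divX.natDegree + 1 ≤ ν := by
        rw [Polynomial.natDegree_divX_eq_natDegree_tsub_one, hPdeg]
        omega
      exact kry_mono hdeg h3
    · have hq2 : (Polynomial.aeval A P.divX) *ᵥ r0 = β • q := by
        rw [hr0def, Matrix.mulVec_smul, hqdef]
      rw [hq2, hSapp, Matrix.mulVec_smul, Matrix.mulVec_smul, smul_smul, smul_smul]
      have hcoef : β * (-(P.coeff 0)⁻¹ * β⁻¹) * β = β * -(P.coeff 0)⁻¹ := by
        have hi : β⁻¹ * β = 1 := inv_mul_cancel₀ hβ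
        calc β * (-(P.coeff 0)⁻¹ * β⁻¹) * β = β * (-(P.coeff 0)⁻¹ * (β⁻¹ * β)) := by ring
          _ = β * -(P.coeff 0)⁻¹ := by rw [hi, mul_one]
      rw [hcoef, ← smul_smul, ← Matrix.mulVec_smul, ← hv0eq, hr0def]
  -- the Krylov spaces stabilize at the grade
  have base_stab : (A ^ ν) *ᵥ r0 ∈ kry ν := by
    have hkill0 : (Polynomial.aeval A P) *ᵥ r0 = 0 := (hkillr0 P).mpr hPkill
    rw [aeval_mulVec, hPdeg, Finset.sum_range_succ] at hkill0
    have hlc : P.coeff ν ≠ 0 := by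
      rw [← hPdeg]
      exact Polynomial.leadingCoeff_ne_zero.mpr hPne
    have h1 : (A ^ ν) *ᵥ r0 =
        (-(P.coeff ν)⁻¹) • ∑ i ∈ Finset.range ν, P.coeff i • ((A ^ i) *ᵥ r0) := by
      have h2 : P.coeff ν • ((A ^ ν) *ᵥ r0) =
          -∑ i ∈ Finset.range ν, P.coeff i • ((A ^ i) *ᵥ r0) := by
        rw [eq_neg_iff_add_eq_zero, add_comm]
        exact hkill0
      calc (A ^ ν) *ᵥ r0 = ((P.coeff ν)⁻¹ * P.coeff ν) • ((A ^ ν) *ᵥ r0) := by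
            rw [inv_mul_cancel₀ hlc, one_smul]
        _ = (P.coeff ν)⁻¹ • (P.coeff ν • ((A ^ ν) *ᵥ r0)) := by rw [smul_smul]
        _ = (-(P.coeff ν)⁻¹) • ∑ i ∈ Finset.range ν, P.coeff i • ((A ^ i) *ᵥ r0) := by
            rw [h2, smul_neg, neg_smul]
    rw [h1]
    exact (kry ν).smul_mem _ (Submodule.sum_mem _ fun i hi =>
      (kry ν).smul_mem _ (kry_gen ν i (Finset.mem_range.mp hi)))
  have Astab : ∀ v ∈ kry ν, A *ᵥ v ∈ kry ν := by
    intro v hv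
    induction hv using Submodule.span_induction with
    | mem w hw =>
      obtain ⟨i, rfl⟩ := hw
      have h1 : A *ᵥ ((A ^ (i : ℕ)) *ᵥ r0) = (A ^ ((i : ℕ) + 1)) *ᵥ r0 := by
        rw [Matrix.mulVec_mulVec, pow_succ']
      rw [h1]
      rcases lt_or_eq_of_le (Nat.succ_le_of_lt i.2) with h | h
      · exact kry_gen ν _ h
      · have h' : (i : ℕ) + 1 = ν := h
        rw [h']
        exact base_stab
    | zero => rw [Matrix.mulVec_zero]; exact (kry ν).zero_mem
    | add u w _ _ hu hw => rw [Matrix.mulVec_add]; exact (kry ν).add_mem hu hw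
    | smul a u _ hu => rw [Matrix.mulVec_smul]; exact (kry ν).smul_mem a hu
  have STAB : ∀ j, (A ^ j) *ᵥ r0 ∈ kry ν := by
    intro j
    induction j with
    | zero => rw [pow_zero, Matrix.one_mulVec]; exact r0_mem ν hν_pos
    | succ j ih =>
      rw [pow_succ', ← Matrix.mulVec_mulVec]
      exact Astab _ ih
  have kry_nu : ∀ k, kry k ≤ kry ν := by
    intro k
    apply Submodule.span_le.mpr
    rintro v ⟨i, rfl⟩
    exact STAB (i : ℕ)
  -- a vanishing minimal residual means the grade has been reached
  have zero_res_grade : ∀ k, r0 - S (m k) = 0 → ν ≤ k := by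
    intro k hzero
    obtain ⟨a, ha⟩ : ∃ a : Fin k → ℝ, ∑ i, a i • ((A ^ (i : ℕ)) *ᵥ r0) = m k :=
      (Submodule.mem_span_range_iff_exists_fun ℝ).mp (hm k)
    set R : Polynomial ℝ := Polynomial.C 1 -
      ∑ i : Fin k, Polynomial.C (β * a i) * Polynomial.X ^ ((i : ℕ) + 1) with hRdef
    have hRcoeff : R.coeff 0 = 1 := by
      rw [hRdef, Polynomial.coeff_sub, Polynomial.coeff_C_zero,
        Polynomial.finset_sum_coeff]
      have h5 : ∀ i : Fin k,
          (Polynomial.C (β * a i) * Polynomial.X ^ ((i : ℕ) + 1)).coeff 0 = 0 := by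
        intro i
        rw [Polynomial.coeff_C_mul, Polynomial.coeff_X_pow]
        simp
      rw [Finset.sum_congr rfl fun i _ => h5 i]
      simp
    have hRne : R ≠ 0 := by
      intro h
      rw [h, Polynomial.coeff_zero] at hRcoeff
      exact absurd hRcoeff (by norm_num)
    have hRkill : (Polynomial.aeval A R) *ᵥ r0 = 0 := by
      rw [hRdef, map_sub, map_sum, Matrix.sub_mulVec, sum_mulVec_aux, halgC, one_smul]
      have hterm : ∀ i : Fin k,
          (Polynomial.aeval A (Polynomial.C (β * a i) * Polynomial.X ^ ((i : ℕ) + 1))) *ᵥ r0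
            = (β * a i) • ((A ^ ((i : ℕ) + 1)) *ᵥ r0) := by
        intro i
        have h9 : Polynomial.aeval A (Polynomial.C (β * a i) * Polynomial.X ^ ((i : ℕ) + 1))
            = (β * a i) • A ^ ((i : ℕ) + 1) := by
          rw [_root_.map_mul, Polynomial.aeval_C, map_pow, Polynomial.aeval_X,
            Algebra.algebraMap_eq_smul_one, smul_mul_assoc, one_mul]
        rw [h9, Matrix.smul_mulVec]
      rw [Finset.sum_congr rfl fun i _ => hterm i]
      have hSm : S (m k) = ∑ i : Fin k, (β * a i) • ((A ^ ((i : ℕ) + 1)) *ᵥ r0) := by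
        rw [hSapp, ← ha, mulVec_sum_aux, Finset.smul_sum]
        refine Finset.sum_congr rfl fun i _ => ?_
        rw [Matrix.mulVec_smul, smul_smul, Matrix.mulVec_mulVec, ← pow_succ']
      rw [← hSm]
      exact hzero
    have hRdeg : R.natDegree ≤ k := by
      rw [hRdef]
      refine le_trans (Polynomial.natDegree_sub_le _ _) ?_
      rw [max_le_iff]
      constructor
      · rw [Polynomial.natDegree_C]; omega
      · refine Polynomial.natDegree_sum_le_of_forall_le _ _ fun i _ => ?_
        refine le_trans (Polynomial.natDegree_C_mul_le _ _) ?_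
        rw [Polynomial.natDegree_X_pow]
        exact i.2
    exact le_trans (hgrade_min R hRne ((hkillr0 R).mp hRkill)) hRdeg
  -- main lemma : the Krylov space is spanned by the iterates
  have MAIN : ∀ k, kry k ≤ W k := by
    intro k
    induction k with
    | zero => rw [kry_zero]; exact bot_le
    | succ k ih =>
      have hWm : W k ≤ W (k + 1) := W_mono k
      have hknew : (A ^ k) *ᵥ r0 ∈ W (k + 1) := by
        by_cases hcase : r0 - S (m k) = 0
        · exact hWm (ih (kry_mono (zero_res_grade k hcase) (STAB k)))
        · have hnot := NS k hcase
          have hXW : X (k + 1) - x0 ∈ W (k + 1) := W_genX (k + 1) (k + 1) le_rfl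
          have hXk : X (k + 1) - x0 ∈ kry (k + 1) := hXkry k
          have hUle : kry k ⊔ (ℝ ∙ (X (k + 1) - x0)) ≤ kry (k + 1) :=
            sup_le (kry_mono (Nat.le_succ k))
              ((Submodule.span_singleton_le_iff_mem _ _).mpr hXk)
          have hlt : kry k < kry k ⊔ (ℝ ∙ (X (k + 1) - x0)) := by
            refine lt_of_le_of_ne le_sup_left fun h => hnot ?_
            have hmem2 : X (k + 1) - x0 ∈ kry k ⊔ (ℝ ∙ (X (k + 1) - x0)) :=
              Submodule.mem_sup_right (Submodule.mem_span_singleton_self _)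
            rwa [← h] at hmem2
          have hrank1 : Module.finrank ℝ (kry (k + 1)) ≤ Module.finrank ℝ (kry k) + 1 := by
            rw [kry_succ k]
            refine le_trans (Submodule.finrank_add_le_finrank_add_finrank _ _) ?_
            have hs : Module.finrank ℝ (ℝ ∙ ((A ^ k) *ᵥ r0)) ≤ 1 := by
              by_cases hz : (A ^ k) *ᵥ r0 = 0
              · rw [hz, Submodule.span_zero_singleton]
                simp
              · rw [finrank_span_singleton hz]
            omega
          have hrank2 : Module.finrank ℝ (kry k) + 1 ≤
              Module.finrank ℝ ↥(kry k ⊔ (ℝ ∙ (X (k + 1) - x0))) :=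
            Submodule.finrank_lt_finrank_of_lt hlt
          have hUeq : kry k ⊔ (ℝ ∙ (X (k + 1) - x0)) = kry (k + 1) :=
            Submodule.eq_of_le_of_finrank_le hUle (le_trans hrank1 hrank2)
          have hmem : (A ^ k) *ᵥ r0 ∈ kry k ⊔ (ℝ ∙ (X (k + 1) - x0)) := by
            rw [hUeq]
            exact kry_gen (k + 1) k (Nat.lt_succ_self k)
          have hle2 : kry k ⊔ (ℝ ∙ (X (k + 1) - x0)) ≤ W (k + 1) :=
            sup_le (le_trans ih hWm) ((Submodule.span_singleton_le_iff_mem _ _).mpr hXW)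
          exact hle2 hmem
      rw [kry_succ k]
      exact sup_le (le_trans ih hWm) ((Submodule.span_singleton_le_iff_mem _ _).mpr hknew)
  -- independence of the iterates while the residuals are nonzero
  have IND : ∀ k, (∀ j, j ≤ k → β • (b - A *ᵥ X j) ≠ 0) →
      ∀ e : ℕ → ℝ, (∑ i ∈ Finset.range (k + 1), e i) = 0 →
        (∑ i ∈ Finset.range (k + 1), e i • X i) = 0 → ∀ i ≤ k, e i = 0 := by
    intro k hres e hsum hvec
    have hw : ∀ j, j + 1 ≤ k → r0 - S (m j) ≠ 0 := by
      intro j hj hzero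
      apply hres (j + 1) hj
      rw [hfX, hres_succ j, hzero, map_zero, sub_zero]
    have claim : ∀ j, j ≤ k → ∀ e : ℕ → ℝ,
        (∑ l ∈ Finset.range (j + 1), e l • (X l - x0)) = 0 →
        ∀ i, 1 ≤ i → i ≤ j → e i = 0 := by
      intro j
      induction j with
      | zero => intro _ _ _ i h1 h2; omega
      | succ j ih =>
        intro hjk e hsum0 i h1 h2
        rw [Finset.sum_range_succ] at hsum0
        have hlast : e (j + 1) = 0 := by
          by_contra hne
          have hsum_mem : (∑ l ∈ Finset.range (j + 1), e l • (X l - x0)) ∈ W j :=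
            Submodule.sum_mem _ fun l hl =>
              (W j).smul_mem _ (W_genX j l (by
                have := Finset.mem_range.mp hl
                omega))
          have h4 : e (j + 1) • (X (j + 1) - x0) =
              -(∑ l ∈ Finset.range (j + 1), e l • (X l - x0)) := by
            rw [eq_neg_iff_add_eq_zero, add_comm]
            exact hsum0
          have h3 : X (j + 1) - x0 =
              (-(e (j + 1))⁻¹) • ∑ l ∈ Finset.range (j + 1), e l • (X l - x0) := by
            calc X (j + 1) - x0
                = ((e (j + 1))⁻¹ * e (j + 1)) • (X (j + 1) - x0) := by
                  rw [inv_mul_cancel₀ hne, one_smul]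
              _ = (e (j + 1))⁻¹ • (e (j + 1) • (X (j + 1) - x0)) := by rw [smul_smul]
              _ = (-(e (j + 1))⁻¹) • ∑ l ∈ Finset.range (j + 1), e l • (X l - x0) := by
                  rw [h4, smul_neg, neg_smul]
          have hXj : X (j + 1) - x0 ∈ kry j := by
            rw [h3]
            exact (kry j).smul_mem _ (W_le_kry j hsum_mem)
          exact NS j (hw j hjk) hXj
        rcases Nat.lt_or_ge i (j + 1) with h | h
        · refine ih (by omega) e ?_ i h1 (by omega)
          rw [hlast, zero_smul, add_zero] at hsum0
          exact hsum0
        · have hij : i = j + 1 := by omega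
          rw [hij]
          exact hlast
    have h1 : (∑ i ∈ Finset.range (k + 1), e i • (X i - x0)) = 0 := by
      have h2 : ∑ i ∈ Finset.range (k + 1), e i • (X i - x0)
          = (∑ i ∈ Finset.range (k + 1), e i • X i) -
            (∑ i ∈ Finset.range (k + 1), e i) • x0 := by
        rw [Finset.sum_smul, ← Finset.sum_sub_distrib]
        exact Finset.sum_congr rfl fun i _ => smul_sub _ _ _
      rw [h2, hsum, hvec, zero_smul, sub_zero]
    intro i hik
    rcases Nat.eq_zero_or_pos i with h | h
    · subst h
      have h2 : ∀ l ∈ Finset.range k, e (l + 1) = 0 := fun l hl =>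
        claim k le_rfl e h1 (l + 1) (by omega) (by
          have := Finset.mem_range.mp hl
          omega)
      have h3 := Finset.sum_range_succ' e k
      rw [hsum, Finset.sum_eq_zero h2, zero_add] at h3
      exact h3.symm
    · exact claim k le_rfl e h1 i h hik
  -- affine combination identities
  have sum_sub : ∀ (k : ℕ) (d : ℕ → ℝ), (∑ i ∈ Finset.range (k + 1), d i) = 1 →
      (∑ i ∈ Finset.range (k + 1), d i • (X i - x0)) =
        (∑ i ∈ Finset.range (k + 1), d i • X i) - x0 := by
    intro k d hd
    have h2 : ∑ i ∈ Finset.range (k + 1), d i • (X i - x0)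
        = (∑ i ∈ Finset.range (k + 1), d i • X i) -
          (∑ i ∈ Finset.range (k + 1), d i) • x0 := by
      rw [Finset.sum_smul, ← Finset.sum_sub_distrib]
      exact Finset.sum_congr rfl fun i _ => smul_sub _ _ _
    rw [h2, hd, one_smul]
  have comb : ∀ (k : ℕ) (d : ℕ → ℝ), (∑ i ∈ Finset.range (k + 1), d i) = 1 →
      (∑ i ∈ Finset.range (k + 1), d i • (β • (b - A *ᵥ X i)))
        = r0 - S ((∑ i ∈ Finset.range (k + 1), d i • X i) - x0) := by
    intro k d hd
    calc ∑ i ∈ Finset.range (k + 1), d i • (β • (b - A *ᵥ X i))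
        = ∑ i ∈ Finset.range (k + 1), (d i • r0 - S (d i • (X i - x0))) := by
          refine Finset.sum_congr rfl fun i _ => ?_
          rw [hfX (X i), smul_sub, ← _root_.map_smul S]
      _ = (∑ i ∈ Finset.range (k + 1), d i) • r0 -
            S (∑ i ∈ Finset.range (k + 1), d i • (X i - x0)) := by
          rw [Finset.sum_sub_distrib, Finset.sum_smul, map_sum]
      _ = r0 - S ((∑ i ∈ Finset.range (k + 1), d i • X i) - x0) := by
          rw [hd, one_smul, sum_sub k d hd]
  have comb_mem : ∀ (k : ℕ) (d : ℕ → ℝ), (∑ i ∈ Finset.range (k + 1), d i) = 1 →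
      (∑ i ∈ Finset.range (k + 1), d i • X i) - x0 ∈ W k := by
    intro k d hd
    rw [← sum_sub k d hd]
    exact Submodule.sum_mem _ fun i hi =>
      (W k).smul_mem _ (W_genX k i (by
        have := Finset.mem_range.mp hi
        omega))
  -- the extrapolation coefficients
  have hcoeff : ∀ k, ∃ c : ℕ → ℝ, (∑ i ∈ Finset.range (k + 1), c i) = 1 ∧
      (∑ i ∈ Finset.range (k + 1), c i • X i) = x0 + m k := by
    intro k
    obtain ⟨a, ha⟩ : ∃ a : Fin (k + 1) → ℝ, ∑ i, a i • (X (i : ℕ) - x0) = m k :=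
      (Submodule.mem_span_range_iff_exists_fun ℝ).mp (MAIN k (hm k))
    set t : ℝ := ∑ i : Fin (k + 1), a i with htdef
    refine ⟨fun i => (if h : i < k + 1 then a ⟨i, h⟩ else 0) +
      (if i = 0 then 1 - t else 0), ?_, ?_⟩
    · rw [Finset.sum_add_distrib]
      have e1 : (∑ i ∈ Finset.range (k + 1), if h : i < k + 1 then a ⟨i, h⟩ else 0) = t := by
        rw [← Fin.sum_univ_eq_sum_range (fun i => if h : i < k + 1 then a ⟨i, h⟩ else 0) (k + 1)]
        exact Finset.sum_congr rfl fun i _ => by rw [dif_pos i.2]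
      have e2 : (∑ i ∈ Finset.range (k + 1), if i = 0 then 1 - t else 0) = 1 - t := by
        rw [Finset.sum_ite_eq' (Finset.range (k + 1)) 0 (fun _ => 1 - t),
          if_pos (Finset.mem_range.mpr (by omega))]
      rw [e1, e2]
      ring
    · have hsplit : ∀ i ∈ Finset.range (k + 1),
          ((if h : i < k + 1 then a ⟨i, h⟩ else 0) + (if i = 0 then 1 - t else 0)) • X i =
          (if h : i < k + 1 then a ⟨i, h⟩ else 0) • X i +
            (if i = 0 then 1 - t else 0) • X i := fun i _ => add_smul _ _ _
      rw [Finset.sum_congr rfl hsplit, Finset.sum_add_distrib]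
      have e1 : (∑ i ∈ Finset.range (k + 1),
          (if h : i < k + 1 then a ⟨i, h⟩ else 0) • X i) =
          ∑ i : Fin (k + 1), a i • X (i : ℕ) := by
        rw [← Fin.sum_univ_eq_sum_range
          (fun i => (if h : i < k + 1 then a ⟨i, h⟩ else 0) • X i) (k + 1)]
        exact Finset.sum_congr rfl fun i _ => by rw [dif_pos i.2]
      have e2 : (∑ i ∈ Finset.range (k + 1), (if i = 0 then 1 - t else 0) • X i) =
          (1 - t) • x0 := by
        have h5 : ∀ i ∈ Finset.range (k + 1), (if i = 0 then 1 - t else 0) • X i =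
            (if i = 0 then (1 - t) • X i else 0) := by
          intro i _
          split <;> simp
        rw [Finset.sum_congr rfl h5,
          Finset.sum_ite_eq' (Finset.range (k + 1)) 0 (fun i => (1 - t) • X i),
          if_pos (Finset.mem_range.mpr (by omega)), hX0]
      have e3 : (∑ i : Fin (k + 1), a i • X (i : ℕ)) = m k + t • x0 := by
        rw [← ha, htdef, Finset.sum_smul, ← Finset.sum_add_distrib]
        refine Finset.sum_congr rfl fun i _ => ?_
        rw [smul_sub]
        abel
      rw [e1, e2, e3, sub_smul, one_smul]
      abel
  choose c hc1 hc2 using hcoeff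
  have hcpt : ∀ k, (∑ i ∈ Finset.range (k + 1), c k i • X i) - x0 = m k := by
    intro k
    rw [hc2 k, add_sub_cancel_left]
  refine ⟨X, c, hX0, ?_, ?_, ?_⟩
  · -- IsDIIS
    intro k
    refine ⟨hc1 k, ?_, ?_⟩
    · intro d hd
      beta_reduce
      rw [l2φ, l2φ, comb k (c k) (hc1 k), comb k d hd, hcpt k]
      exact hmin k _ (W_le_kry k (comb_mem k d hd))
    · beta_reduce
      have hgsplit : ∑ i ∈ Finset.range (k + 1), c k i • (X i + β • (b - A *ᵥ X i))
          = (∑ i ∈ Finset.range (k + 1), c k i • X i) +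
            ∑ i ∈ Finset.range (k + 1), c k i • (β • (b - A *ᵥ X i)) := by
        rw [← Finset.sum_add_distrib]
        exact Finset.sum_congr rfl fun i _ => smul_add _ _ _
      rw [hgsplit, comb k (c k) (hc1 k), hcpt k, hc2 k, hXs k]
  · -- uniqueness of the extrapolation coefficients
    intro k hres d hd hdmin i hik
    have hcval : (∑ l ∈ Finset.range (k + 1), c k l • (β • (b - A *ᵥ X l)))
        = r0 - S (m k) := by
      rw [comb k (c k) (hc1 k), hcpt k]
    have hdval := comb k d hd
    have hud_kry : (∑ l ∈ Finset.range (k + 1), d l • X l) - x0 ∈ kry k :=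
      W_le_kry k (comb_mem k d hd)
    have hle : ‖φ (r0 - S ((∑ l ∈ Finset.range (k + 1), d l • X l) - x0))‖ ≤
        ‖φ (r0 - S (m k))‖ := by
      have h6 := hdmin (c k) (hc1 k)
      rw [l2φ, l2φ, hcval, hdval] at h6
      exact h6
    have hudm : (∑ l ∈ Finset.range (k + 1), d l • X l) - x0 = m k :=
      huniq k _ hud_kry hle
    have hdpt : ∑ l ∈ Finset.range (k + 1), d l • X l = x0 + m k := by
      rw [← hudm]
      abel
    have hdc : ∑ l ∈ Finset.range (k + 1), (d l - c k l) • X l = 0 := by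
      have h7 : ∑ l ∈ Finset.range (k + 1), (d l - c k l) • X l
          = (∑ l ∈ Finset.range (k + 1), d l • X l) -
            (∑ l ∈ Finset.range (k + 1), c k l • X l) := by
        rw [← Finset.sum_sub_distrib]
        exact Finset.sum_congr rfl fun l _ => sub_smul _ _ _
      rw [h7, hdpt, hc2 k, sub_self]
    have hsum0 : ∑ l ∈ Finset.range (k + 1), (d l - c k l) = 0 := by
      rw [Finset.sum_sub_distrib, hd, hc1 k, sub_self]
    have h8 := IND k hres (fun l => d l - c k l) hsum0 hdc i hik
    have h9 : d i - c k i = 0 := h8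
    linarith
  · -- finite termination at the grade
    refine ⟨ν + 1, le_rfl, ?_⟩
    obtain ⟨u, hu1, hu2⟩ := r0_reach
    have hzero : r0 - S (m ν) = 0 := by
      have h1 := hmin ν u hu1
      rw [hu2, sub_self, map_zero, norm_zero] at h1
      have h2 : ‖φ (r0 - S (m ν))‖ = 0 := le_antisymm h1 (norm_nonneg _)
      have h3 : φ (r0 - S (m ν)) = 0 := norm_eq_zero.mp h2
      exact (LinearEquiv.map_eq_zero_iff φ).mp h3
    have hXν : X (ν + 1) = x0 + m ν := by
      rw [hXs, hzero, add_zero]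
    have hfzero : β • (b - A *ᵥ X (ν + 1)) = 0 := by
      rw [hfX, hXν, add_sub_cancel_left, hzero]
    have hb2 : A *ᵥ X (ν + 1) = b := by
      rcases smul_eq_zero.mp hfzero with h | h
      · exact absurd h hβ
      · exact (sub_eq_zero.mp h).symm
    rw [← hb2, hAinv (X (ν + 1))]
end
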